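/- arXiv:2508.06212 — 6 statements merged into one kernel-verified Lean document; each statement's English description precedes it below -/
import Mathlib

section
/- Let G be a 2-connected graph with normal spanning tree T and compatible numbering. If (A, B) is a half-connected type-1 separation of G and (A', B') is any type-1 separation of G, then (A, B) and (A', B') are nested. -/
open SimpleGraph

variable {V : Type*}

/-- `u` lies on every path (hence the unique path) from root `r` to `v` in tree `T`:
`u` is an ancestor of `v`. -/
def Anc (T : SimpleGraph V) (r u v : V) : Prop :=
  ∀ p : T.Walk r v, p.IsPath → u ∈ p.support

/-- proper ancestor -/
def PAnc (T : SimpleGraph V) (r u v : V) : Prop :=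
  Anc T r u v ∧ u ≠ v

/-- `T` is a normal spanning tree of `G` rooted at `r`. -/
def IsNormalSpanningTree (G T : SimpleGraph V) (r : V) : Prop :=
  T.IsTree ∧ T ≤ G ∧ ∀ u v : V, G.Adj u v → Anc T r u v ∨ Anc T r v u

/-- `w` is a child of `v` in the rooted tree `(T, r)`. -/
def IsChild (T : SimpleGraph V) (r v w : V) : Prop :=
  T.Adj v w ∧ Anc T r v w

/-- the set of descendants of `v` (including `v`). -/
def Desc (T : SimpleGraph V) (r v : V) : Set V := {u | Anc T r v u}

/-- `L(v)`: proper ancestors of `v` adjacent in `G` to some descendant of `v`. -/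
def Lset (G T : SimpleGraph V) (r v : V) : Set V :=
  {u | PAnc T r u v ∧ ∃ w, Anc T r v w ∧ G.Adj u w}

/-- `x` is the `k`-th lowpoint of `v`: the `k`-th lowest element of `L(v)`,
or `v` itself if `|L(v)| < k`. -/
def IsKthLowpoint (G T : SimpleGraph V) (r : V) (k : ℕ) (v x : V) : Prop :=
  (x ∈ Lset G T r v ∧ {u ∈ Lset G T r v | PAnc T r u x}.ncard = k - 1) ∨
  ((Lset G T r v).ncard < k ∧ x = v)

/-- `x` is the highpoint of `v`: the highest element of `L(v) \ {parent v}`,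
or `v` itself if that set is empty. -/
def IsHighpoint (G T : SimpleGraph V) (r : V) (v x : V) : Prop :=
  (x ∈ Lset G T r v ∧ ¬ IsChild T r x v ∧
    ∀ u ∈ Lset G T r v, ¬ IsChild T r u v → Anc T r u x) ∨
  ((∀ u ∈ Lset G T r v, IsChild T r u v) ∧ x = v)

/-- a numbering of the vertices by `1, …, n`. -/
def IsNumbering [Fintype V] (num : V → ℕ) : Prop :=
  Function.Injective num ∧ ∀ v, num v ∈ Set.Icc 1 (Fintype.card V)

/-- The numbering `num` is compatible with the normal spanning tree `(T, r)`,
where `lwpt1 v` and `lwpt2 v` are the first and second lowpoints of `v`. -/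
def CompatibleNumbering [Fintype V] (G T : SimpleGraph V) (r : V)
    (num : V → ℕ) (lwpt1 lwpt2 : V → V) : Prop :=
  IsNumbering num ∧
  (∀ v : V, num '' Desc T r v = Set.Icc (num v) (num v + (Desc T r v).ncard - 1)) ∧
  (∀ v, IsKthLowpoint G T r 1 v (lwpt1 v)) ∧
  (∀ v, IsKthLowpoint G T r 2 v (lwpt2 v)) ∧
  (∀ p j k : V, IsChild T r p j → IsChild T r p k → num j < num k →
    num (lwpt1 k) < num (lwpt1 j) ∨
      (lwpt1 j = lwpt1 k ∧ num (lwpt2 j) ≤ num (lwpt2 k)))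

/-- `w` is the left child of `v`: its largest-numbered child. -/
def IsLeftChild (T : SimpleGraph V) (r : V) (num : V → ℕ) (v w : V) : Prop :=
  IsChild T r v w ∧ ∀ u, IsChild T r v u → num u ≤ num w

/-- `w` is a leftmost descendant of `v`. -/
def LeftmostDesc (T : SimpleGraph V) (r : V) (num : V → ℕ) (v w : V) : Prop :=
  Relation.ReflTransGen (IsLeftChild T r num) v w

/-- `T[a,b]` is a leftmost path: `b` is a leftmost descendant of some child of `a`. -/
def IsLeftmostPath (T : SimpleGraph V) (r : V) (num : V → ℕ) (a b : V) : Prop :=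
  ∃ a', IsChild T r a a' ∧ LeftmostDesc T r num a' b

/-- a back-edge `(x, y)` with `x` a descendant of `y`. -/
def IsBackEdge (G T : SimpleGraph V) (r : V) (x y : V) : Prop :=
  G.Adj x y ∧ ¬ T.Adj x y ∧ PAnc T r y x

/-- `T[a,b]` is stable. -/
def Stable (G T : SimpleGraph V) (r : V) (num : V → ℕ) (a b : V) : Prop :=
  ∃ a', IsChild T r a a' ∧ LeftmostDesc T r num a' b ∧
    ∀ x y, IsBackEdge G T r x y → num a' ≤ num x → num x < num b → num a ≤ num y

/-- `(A, B)` is a separation of `G`. -/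
def IsSeparation (G : SimpleGraph V) (A B : Set V) : Prop :=
  A ∪ B = Set.univ ∧ (A \ B).Nonempty ∧ (B \ A).Nonempty ∧
    ∀ u ∈ A \ B, ∀ v ∈ B \ A, ¬ G.Adj u v

/-- a 2-separation. -/
def IsSeparation2 (G : SimpleGraph V) (A B : Set V) : Prop :=
  IsSeparation G A B ∧ (A ∩ B).ncard = 2

/-- two separations are nested (up to swapping sides). -/
def Nested (A B C D : Set V) : Prop :=
  (A ⊆ C ∧ D ⊆ B) ∨ (A ⊆ D ∧ C ⊆ B) ∨ (B ⊆ C ∧ D ⊆ A) ∨ (B ⊆ D ∧ C ⊆ A)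

/-- a totally-nested 2-separation. -/
def TotallyNested2 (G : SimpleGraph V) (A B : Set V) : Prop :=
  IsSeparation2 G A B ∧ ∀ C D : Set V, IsSeparation2 G C D → Nested A B C D

/-- a half-connected separation. -/
def HalfConnected (G : SimpleGraph V) (A B : Set V) : Prop :=
  (G.induce (A \ B)).Connected ∨ (G.induce (B \ A)).Connected

/-- the open tree path `T(a,b)`. -/
def Topen (T : SimpleGraph V) (r a b : V) : Set V :=
  {u | PAnc T r a u ∧ PAnc T r u b}

/-- type-2 separations. -/
def IsType2Sep (G T : SimpleGraph V) (r : V) (A B : Set V) : Prop :=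
  IsSeparation2 G A B ∧ ∃ a b : V, A ∩ B = {a, b} ∧ r ≠ a ∧ r ≠ b ∧
    (Topen T r a b).Nonempty ∧
    ((r ∈ A \ B ∧ Topen T r a b ⊆ B \ A) ∨ (r ∈ B \ A ∧ Topen T r a b ⊆ A \ B))

/-- type-1 separations. -/
def IsType1Sep (G T : SimpleGraph V) (r : V) (A B : Set V) : Prop :=
  IsSeparation2 G A B ∧ ¬ IsType2Sep G T r A B

/-- 2-connectivity: more than two vertices and no cutvertex. -/
def TwoConnected [Fintype V] (G : SimpleGraph V) : Prop :=
  2 < Fintype.card V ∧ ∀ v : V, (G.induce {u | u ≠ v}).Connected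

/-- `(A,B)` separates `u` and `v`. -/
def SepSeparates (A B : Set V) (u v : V) : Prop :=
  (u ∈ A \ B ∧ v ∈ B \ A) ∨ (u ∈ B \ A ∧ v ∈ A \ B)

/-- minimal separation: each separator vertex has neighbours on both proper sides. -/
def IsMinimalSep (G : SimpleGraph V) (A B : Set V) : Prop :=
  IsSeparation G A B ∧ ∀ v ∈ A ∩ B,
    (∃ u ∈ A \ B, G.Adj v u) ∧ (∃ u ∈ B \ A, G.Adj v u)

/-- `m` is the number of the smallest-numbered neighbour of `v`. -/
def IsNmin (G : SimpleGraph V) (num : V → ℕ) (v : V) (m : ℕ) : Prop :=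
  (∃ u, G.Adj v u ∧ num u = m) ∧ ∀ u, G.Adj v u → m ≤ num u

/-- `w` is the second-largest child of `v`. -/
def IsSecondLargestChild (T : SimpleGraph V) (r : V) (num : V → ℕ) (v w : V) : Prop :=
  IsChild T r v w ∧ ({u | IsChild T r v u ∧ num w < num u}).ncard = 1

/-- `m = witn(v)`. -/
def IsWitn (G T : SimpleGraph V) (r : V) (num : V → ℕ) (lwpt1 : V → V)
    (v : V) (m : ℕ) : Prop :=
  (∃ w, IsSecondLargestChild T r num v w ∧
    ∃ nm, IsNmin G num v nm ∧ m = min nm (num (lwpt1 w))) ∨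
  ((¬ ∃ w, IsSecondLargestChild T r num v w) ∧ IsNmin G num v m)

/-- `S` is an interval of `X` with respect to the numbering. -/
def IsIntervalIn (num : V → ℕ) (X S : Set V) : Prop :=
  S ⊆ X ∧ ∀ x ∈ S, ∀ z ∈ S, ∀ y ∈ X, num x ≤ num y → num y ≤ num z → y ∈ S

/-- `S` is a cyclic interval of `X`. -/
def IsCyclicIntervalIn (num : V → ℕ) (X S : Set V) : Prop :=
  IsIntervalIn num X S ∨ IsIntervalIn num X (X \ S)

set_option linter.unusedSectionVars false
namespace T1
open SimpleGraph Walk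

variable {V : Type*} {T : SimpleGraph V} {r : V}

section Tree
variable (hT : T.IsTree)
include hT

lemma anc_of_path {u v : V} (p : T.Walk r v) (hp : p.IsPath) (hu : u ∈ p.support) :
    Anc T r u v := by
  intro q hq
  obtain ⟨p0, hp0, hun⟩ := hT.existsUnique_path r v
  rwa [hun q hq, ← hun p hp]

omit hT in
lemma anc_refl (v : V) : Anc T r v v := fun p _ => p.end_mem_support

omit hT in
lemma anc_root (v : V) : Anc T r r v := fun p _ => p.start_mem_support

lemma anc_trans {u v w : V} (h1 : Anc T r u v) (h2 : Anc T r v w) : Anc T r u w := by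
  classical
  intro p hp
  have hv : v ∈ p.support := h2 p hp
  have := h1 (p.takeUntil v hv) (hp.takeUntil hv)
  exact p.support_takeUntil_subset hv this

lemma anc_antisymm {u v : V} (h1 : Anc T r u v) (h2 : Anc T r v u) : u = v := by
  classical
  by_contra hne
  obtain ⟨p, hp, -⟩ := hT.existsUnique_path r v
  have hu : u ∈ p.support := h1 p hp
  have hvq : v ∈ (p.takeUntil u hu).support := h2 _ (hp.takeUntil hu)
  have hnd : ((p.takeUntil u hu).append (p.dropUntil u hu)).support.Nodup := by
    rw [p.take_spec hu]; exact hp.support_nodup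
  rw [Walk.support_append] at hnd
  have hdisj := (List.nodup_append'.mp hnd).2.2
  have hvd : v ∈ (p.dropUntil u hu).support.tail := by
    have hend : v ∈ (p.dropUntil u hu).support := Walk.end_mem_support _
    rw [Walk.support_eq_cons] at hend
    rcases List.mem_cons.mp hend with h | h
    · exact absurd h (Ne.symm hne)
    · exact h
  exact hdisj hvq hvd

lemma anc_total {u v w : V} (h1 : Anc T r u w) (h2 : Anc T r v w) :
    Anc T r u v ∨ Anc T r v u := by
  classical
  obtain ⟨p, hp, -⟩ := hT.existsUnique_path r w
  have hu : u ∈ p.support := h1 p hp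
  have hv : v ∈ p.support := h2 p hp
  by_cases hm : u ∈ (p.takeUntil v hv).support
  · exact Or.inl (anc_of_path hT _ (hp.takeUntil hv) hm)
  · have hu' : u ∈ (p.dropUntil v hv).support := by
      have : u ∈ (p.takeUntil v hv).support ∨ u ∈ (p.dropUntil v hv).support := by
        rw [← Walk.mem_support_append_iff, p.take_spec hv]; exact hu
      exact this.resolve_left hm
    set q := p.takeUntil v hv with hqdef
    set d := p.dropUntil v hv with hddef
    have hqp : q.IsPath := hp.takeUntil hv
    have hdp : d.IsPath := hp.dropUntil hv
    set t := d.takeUntil u hu' with htdef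
    have htp : t.IsPath := hdp.takeUntil hu'
    have hnd : (q.append d).support.Nodup := by
      rw [p.take_spec hv]; exact hp.support_nodup
    rw [Walk.support_append] at hnd
    have hdisj := (List.nodup_append'.mp hnd).2.2
    have happ : (q.append t).IsPath := by
      rw [Walk.isPath_def, Walk.support_append, List.nodup_append']
      refine ⟨hqp.support_nodup, htp.support_nodup.sublist (List.tail_sublist _), ?_⟩
      intro x hxq hxt
      have hxv : x ≠ v := by
        intro h; subst h
        have : x ∉ t.support.tail := by
          have := htp.support_nodup
          rw [Walk.support_eq_cons] at this
          exact (List.nodup_cons.mp this).1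
        exact this hxt
      have hxd : x ∈ d.support := d.support_takeUntil_subset hu' (List.mem_of_mem_tail hxt)
      have : x ∈ d.support.tail := by
        rw [Walk.support_eq_cons] at hxd
        exact (List.mem_cons.mp hxd).resolve_left hxv
      exact hdisj hxq this
    have hvm : v ∈ (q.append t).support := by
      rw [Walk.mem_support_append_iff]; exact Or.inl (Walk.end_mem_support _)
    exact Or.inr (anc_of_path hT _ happ hvm)

lemma anc_concat_max {u v : V} (hadj : T.Adj u v) (hanc : Anc T r u v) :
    ∀ z, Anc T r z v → z = v ∨ Anc T r z u := by
  obtain ⟨p, hp, -⟩ := hT.existsUnique_path r u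
  have hvn : v ∉ p.support := by
    intro hv
    exact hadj.ne (anc_antisymm hT hanc (anc_of_path hT p hp hv))
  have hq : (p.concat hadj).IsPath := by
    rw [Walk.isPath_def, Walk.support_concat,
      List.nodup_append']
    exact ⟨hp.support_nodup, List.nodup_singleton v, by
      intro x hx hx'; rw [List.mem_singleton] at hx'; subst hx'; exact hvn hx⟩
  intro z hz
  have hmem := hz (p.concat hadj) hq
  rw [Walk.support_concat, List.mem_append] at hmem
  rcases hmem with h | h
  · exact Or.inr (anc_of_path hT p hp h)
  · exact Or.inl (List.mem_singleton.mp h)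

lemma parent_unique {u w v : V} (h1 : T.Adj u v) (ha1 : Anc T r u v)
    (h2 : T.Adj w v) (ha2 : Anc T r w v) : u = w := by
  have hu := (anc_concat_max hT h2 ha2 u ha1).resolve_left h1.ne
  have hw := (anc_concat_max hT h1 ha1 w ha2).resolve_left h2.ne
  exact anc_antisymm hT hu hw

omit hT in
lemma exists_adj_end {x v : V} (p : T.Walk x v) (hne : x ≠ v) :
    ∃ u, T.Adj u v ∧ u ∈ p.support := by
  induction p with
  | nil => exact absurd rfl hne
  | @cons a b c h q ih =>
    by_cases hbc : b = c
    · subst hbc; exact ⟨a, h, Walk.start_mem_support _⟩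
    · obtain ⟨u, hu1, hu2⟩ := ih hbc
      exact ⟨u, hu1, by rw [Walk.support_cons]; exact List.mem_cons_of_mem _ hu2⟩

lemma exists_parent {v : V} (hv : v ≠ r) : ∃ u, T.Adj u v ∧ Anc T r u v := by
  obtain ⟨p, hp, -⟩ := hT.existsUnique_path r v
  obtain ⟨u, hu1, hu2⟩ := exists_adj_end p (Ne.symm hv)
  exact ⟨u, hu1, anc_of_path hT p hp hu2⟩

end Tree
end T1
namespace T1
section Main
open SimpleGraph Walk

variable {V : Type*} [Fintype V] {G T : SimpleGraph V} {r : V}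
  {num : V → ℕ} {lwpt1 lwpt2 : V → V}

lemma anc_num_le (hnum : CompatibleNumbering G T r num lwpt1 lwpt2)
    {u v : V} (h : Anc T r u v) : num u ≤ num v := by
  have h2 := hnum.2.1 u
  have hm : num v ∈ num '' Desc T r u := ⟨v, h, rfl⟩
  rw [h2] at hm
  exact hm.1

lemma anc_num_lt (hnum : CompatibleNumbering G T r num lwpt1 lwpt2)
    {u v : V} (h : Anc T r u v) (hne : u ≠ v) : num u < num v :=
  lt_of_le_of_ne (anc_num_le hnum h) (fun he => hne (hnum.1.1 he))

lemma cross {W : Set V} (hconn : (G.induce W).Connected) {x y : V} (hx : x ∈ W) (hy : y ∈ W)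
    (P : V → Prop) (hPx : P x) (hPy : ¬ P y) :
    ∃ u v : V, G.Adj u v ∧ u ∈ W ∧ v ∈ W ∧ P u ∧ ¬ P v := by
  obtain ⟨w⟩ := hconn.preconnected ⟨x, hx⟩ ⟨y, hy⟩
  suffices hgen : ∀ (s t : W) (_ : (G.induce W).Walk s t), P s → ¬ P t →
      ∃ u v : V, G.Adj u v ∧ u ∈ W ∧ v ∈ W ∧ P u ∧ ¬ P v by
    exact hgen ⟨x, hx⟩ ⟨y, hy⟩ w hPx hPy
  intro s t w
  induction w with
  | nil => intro hPs hPt; exact absurd hPs hPt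
  | @cons s t' _ h q ih =>
    intro hPs hPt
    by_cases hPt' : P t'
    · exact ih hPt' hPt
    · exact ⟨s, t', comap_adj.mp h, s.2, t'.2, hPs, hPt'⟩

/-- In a normal tree, a `G`-neighbour outside a subtree is a proper ancestor
of the subtree root. -/
lemma nbr_out_anc (hT : IsNormalSpanningTree G T r) {m x y : V}
    (hx : x ∈ Desc T r m) (hy : y ∉ Desc T r m) (hadj : G.Adj x y) :
    Anc T r y m ∧ y ≠ m := by
  have hcomp := hT.2.2 x y hadj
  have hyx : Anc T r y x := by
    rcases hcomp with h | h
    · exact absurd (anc_trans hT.1 hx h) hy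
    · exact h
  have := anc_total hT.1 hyx hx
  rcases this with h | h
  · exact ⟨h, fun he => hy (he ▸ anc_refl m)⟩
  · exact absurd h hy

lemma child_anc_child (hT : T.IsTree) {b c c' : V} (hadj' : T.Adj b c')
    (hanc' : Anc T r b c') (hadjc : T.Adj b c) (hancc : Anc T r b c)
    (h : Anc T r c c') : c = c' := by
  rcases anc_concat_max hT hadj' hanc' c h with h1 | h1
  · exact h1
  · exact absurd (anc_antisymm hT h1 hancc).symm hadjc.ne

lemma sibling_eq (hT : T.IsTree) {b c c' x : V}
    (hadjc : T.Adj b c) (hancc : Anc T r b c)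
    (hadjc' : T.Adj b c') (hancc' : Anc T r b c')
    (hx : x ∈ Desc T r c) (hx' : x ∈ Desc T r c') : c = c' := by
  rcases anc_total hT hx hx' with h | h
  · exact child_anc_child hT hadjc' hancc' hadjc hancc h
  · exact (child_anc_child hT hadjc hancc hadjc' hancc' h).symm

lemma sibling_no_edge (hT : IsNormalSpanningTree G T r) {b c c' x y : V}
    (hne : c ≠ c')
    (hadjc : T.Adj b c) (hancc : Anc T r b c)
    (hadjc' : T.Adj b c') (hancc' : Anc T r b c')
    (hx' : x ∈ Desc T r c) (hy : y ∈ Desc T r c') (hadj : G.Adj x y) : False := by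
  rcases hT.2.2 x y hadj with h | h
  · exact hne (sibling_eq hT.1 hadjc hancc hadjc' hancc' (anc_trans hT.1 hx' h) hy)
  · exact hne (sibling_eq hT.1 hadjc hancc hadjc' hancc' hx' (anc_trans hT.1 hy h))

lemma exists_num_min {S : Set V} (hS : S.Nonempty) :
    ∃ m ∈ S, ∀ x ∈ S, num m ≤ num x :=
  Set.exists_min_image S num (Set.toFinite S) hS

lemma desc_subset_side (hT : IsNormalSpanningTree G T r)
    (hnum : CompatibleNumbering G T r num lwpt1 lwpt2) {S : Set V} {a b u : V}
    (hedge : ∀ x ∈ S, ∀ y, G.Adj x y → y ∈ S ∨ y = a ∨ y = b)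
    (hr : r ∉ S) (hu : u ∈ S) (hca : a ∉ Desc T r u) (hcb : b ∉ Desc T r u) :
    Desc T r u ⊆ S := by
  have key : ∀ n w, num w = n → w ∈ Desc T r u → w ∈ S := by
    intro n
    induction n using Nat.strong_induction_on with
    | _ n ih =>
      intro w hwn hw
      by_cases hwu : w = u
      · exact hwu ▸ hu
      have hwr : w ≠ r := by
        intro he; subst he
        exact hr (((anc_antisymm hT.1 hw (anc_root u)) ▸ hu))
      obtain ⟨p, hp1, hp2⟩ := exists_parent hT.1 hwr
      have hpu : p ∈ Desc T r u := by
        rcases anc_concat_max hT.1 hp1 hp2 u hw with h | h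
        · exact absurd h.symm hwu
        · exact h
      have hlt : num p < num w := anc_num_lt hnum hp2 hp1.ne
      have hpS : p ∈ S := ih (num p) (hwn ▸ hlt) p rfl hpu
      rcases hedge p hpS w (hT.2.1 hp1) with h | h | h
      · exact h
      · exact absurd (h ▸ hw) hca
      · exact absurd (h ▸ hw) hcb
  exact fun w hw => key (num w) w rfl hw

/-- from a subtree, one can exit towards `t` avoiding `q`. -/
lemma exit_desc (hG : TwoConnected G) (hT : IsNormalSpanningTree G T r)
    {q u t : V} (hq : u ≠ q) (ht : t ≠ q) (htd : t ∉ Desc T r u) :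
    ∃ x y, x ∈ Desc T r u ∧ y ∉ Desc T r u ∧ y ≠ q ∧ G.Adj x y ∧
      Anc T r y u ∧ y ≠ u := by
  obtain ⟨x, y, hadj, hxW, hyW, hPx, hPy⟩ :=
    cross (hG.2 q) (show u ∈ {v | v ≠ q} from hq) (show t ∈ {v | v ≠ q} from ht)
      (fun v => v ∈ Desc T r u) (anc_refl u) htd
  obtain ⟨h1, h2⟩ := nbr_out_anc hT hPx hPy hadj
  exact ⟨x, y, hPx, hPy, hyW, hadj, h1, h2⟩

end Main
end T1
namespace T1
section Main2
open SimpleGraph Walk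

variable {V : Type*} [Fintype V] {G T : SimpleGraph V} {r : V}
  {num : V → ℕ} {lwpt1 lwpt2 : V → V}

lemma topen_side (hT : IsNormalSpanningTree G T r)
    (hnum : CompatibleNumbering G T r num lwpt1 lwpt2) {S : Set V} {a b v0 : V}
    (hedge : ∀ x ∈ S, ∀ y, G.Adj x y → y ∈ S ∨ y = a ∨ y = b)
    (hbS : b ∉ S) (hv0S : v0 ∈ S) (hv0T : v0 ∈ Topen T r a b) :
    Topen T r a b ⊆ S := by
  obtain ⟨⟨hav0, hav0ne⟩, ⟨hv0b, hv0bne⟩⟩ := hv0T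
  have Q : ∀ n u, num u = n → Anc T r v0 u → Anc T r u b → u ≠ b → u ∈ S := by
    intro n
    induction n using Nat.strong_induction_on with
    | _ n ih =>
      intro u hn hv0u hub hune
      by_cases huv0 : u = v0
      · exact huv0 ▸ hv0S
      have hur : u ≠ r := by
        intro he; subst he
        have h1 : v0 = u := anc_antisymm hT.1 hv0u (anc_root v0)
        have h2 : a = u := anc_antisymm hT.1 (h1 ▸ hav0) (anc_root a)
        exact hav0ne (h2.trans h1.symm)
      obtain ⟨p, hp1, hp2⟩ := exists_parent hT.1 hur
      have hv0p : Anc T r v0 p :=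
        (anc_concat_max hT.1 hp1 hp2 v0 hv0u).resolve_left (fun h => huv0 h.symm)
      have hpb : Anc T r p b := anc_trans hT.1 hp2 hub
      have hpne : p ≠ b := fun he => hune (anc_antisymm hT.1 hub (he ▸ hp2))
      have hpS : p ∈ S :=
        ih (num p) (hn ▸ anc_num_lt hnum hp2 hp1.ne) p rfl hv0p hpb hpne
      rcases hedge p hpS u (hT.2.1 hp1) with h | h | h
      · exact h
      · exact absurd (anc_antisymm hT.1 hav0 (h ▸ hv0u)) hav0ne
      · exact absurd h hune
  intro u hu
  obtain ⟨⟨hau, haune⟩, hub', hubne'⟩ := hu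
  rcases anc_total hT.1 hub' hv0b with h | h
  · -- Anc u v0 : go upward
    have Q' : ∀ n v, num v = n → v ∈ S → Anc T r u v → Anc T r v b → u ∈ S := by
      intro n
      induction n using Nat.strong_induction_on with
      | _ n ih =>
        intro v hn hvS huv hvb
        by_cases hvu : v = u
        · exact hvu ▸ hvS
        have hvr : v ≠ r := by
          intro he; subst he
          have h1 : u = v := anc_antisymm hT.1 huv (anc_root u)
          have h2 : a = v := anc_antisymm hT.1 (h1 ▸ hau) (anc_root a)
          exact haune (h2.trans h1.symm)
        obtain ⟨p, hp1, hp2⟩ := exists_parent hT.1 hvr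
        have hup : Anc T r u p :=
          (anc_concat_max hT.1 hp1 hp2 u huv).resolve_left (fun h => hvu h.symm)
        have hpS : p ∈ S := by
          rcases hedge v hvS p (hT.2.1 hp1).symm with h | h | h
          · exact h
          · exact absurd (anc_antisymm hT.1 (h ▸ hup) hau) (fun he => haune he.symm)
          · exact absurd ((anc_antisymm hT.1 hvb (h ▸ hp2)) ▸ hvS) hbS
        exact ih (num p) (hn ▸ anc_num_lt hnum hp2 hp1.ne) p rfl hpS hup
          (anc_trans hT.1 hp2 hvb)
    exact Q' (num v0) v0 rfl hv0S h hv0b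
  · exact Q (num u) u rfl h hub' hubne'

lemma pure_side (hG : TwoConnected G) (hT : IsNormalSpanningTree G T r)
    (hnum : CompatibleNumbering G T r num lwpt1 lwpt2)
    {S : Set V} {a b : V}
    (hab : Anc T r a b) (habne : a ≠ b)
    (haS : a ∉ S) (hbS : b ∉ S) (hrS : r ∉ S)
    (hedge : ∀ x ∈ S, ∀ y, G.Adj x y → y ∈ S ∨ y = a ∨ y = b)
    (htopen : ∀ v ∈ S, v ∉ Topen T r a b) :
    S = ⋃ c ∈ {c | (T.Adj b c ∧ Anc T r b c) ∧ c ∈ S}, Desc T r c := by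
  apply Set.Subset.antisymm
  · intro w hw
    have hne : {x | Anc T r x w ∧ x ∈ S}.Nonempty := ⟨w, anc_refl w, hw⟩
    obtain ⟨u, ⟨huw, huS⟩, humin⟩ := exists_num_min hne
    have hstrong : ∀ x, Anc T r x u → x ≠ u → x ∉ S := by
      intro x hxu hxune hxS
      have hle : num u ≤ num x := humin x ⟨anc_trans hT.1 hxu huw, hxS⟩
      exact absurd (anc_num_lt hnum hxu hxune) (not_lt.mpr hle)
    have hur : u ≠ r := fun he => hrS (he ▸ huS)
    obtain ⟨q, hq1, hq2⟩ := exists_parent hT.1 hur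
    have hqS : q ∉ S := hstrong q hq2 hq1.ne
    have hqab : q = a ∨ q = b := by
      rcases hedge u huS q (hT.2.1 hq1).symm with h | h | h
      · exact absurd h hqS
      · exact Or.inl h
      · exact Or.inr h
    have hqnd : q ∉ Desc T r u := fun h => hq1.ne (anc_antisymm hT.1 hq2 h)
    have hclean_a : a ∉ Desc T r u := by
      intro ha
      rcases hqab with hq | hq
      · exact hqnd (hq.symm ▸ ha)
      · exact habne (anc_antisymm hT.1 hab (anc_trans hT.1 (hq ▸ hq2) ha))
    have hclean_b : b ∉ Desc T r u := by
      intro hb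
      rcases hqab with hq | hq
      · exact htopen u huS ⟨⟨hq ▸ hq2, fun he => haS (he ▸ huS)⟩,
          hb, fun he => hbS (he ▸ huS)⟩
      · exact hqnd (hq.symm ▸ hb)
    have hdesc : Desc T r u ⊆ S :=
      desc_subset_side hT hnum hedge hrS huS hclean_a hclean_b
    have hqb : q = b := by
      rcases hqab with hq | hq
      · exfalso
        subst hq
        obtain ⟨x, y, hx, hynd, hyq, hadjxy, hyu, hyune⟩ :=
          exit_desc (t := b) hG hT hq1.ne.symm (Ne.symm habne) hclean_b
        have hyS : y ∉ S := hstrong y hyu hyune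
        rcases hedge x (hdesc hx) y hadjxy with h | h | h
        · exact hyS h
        · exact hyq h
        · subst h
          rcases anc_concat_max hT.1 hq1 hq2 y hyu with h1 | h1
          · exact hyune h1
          · exact habne (anc_antisymm hT.1 hab h1)
      · exact hq
    simp only [Set.mem_iUnion]
    exact ⟨u, ⟨⟨hqb ▸ hq1, hqb ▸ hq2⟩, huS⟩, huw⟩
  · intro w hw
    simp only [Set.mem_iUnion] at hw
    obtain ⟨c, ⟨⟨hc1, hc2⟩, hc3⟩, hcw⟩ := hw
    have hclean_a : a ∉ Desc T r c := fun h =>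
      habne (anc_antisymm hT.1 hab (anc_trans hT.1 hc2 h))
    have hclean_b : b ∉ Desc T r c := fun h => hc1.ne (anc_antisymm hT.1 hc2 h)
    exact desc_subset_side hT hnum hedge hrS hc3 hclean_a hclean_b hcw

end Main2
end T1
namespace T1
section Main3
open SimpleGraph Walk

variable {V : Type*} [Fintype V] {G T : SimpleGraph V} {r : V}
  {num : V → ℕ} {lwpt1 lwpt2 : V → V}

def PureStruct (G T : SimpleGraph V) (r : V) (a b : V) (C : Set V) (A B : Set V) : Prop :=
  A ∩ B = {a, b} ∧ Anc T r a b ∧ a ≠ b ∧ C.Nonempty ∧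
    (∀ c ∈ C, T.Adj b c ∧ Anc T r b c) ∧ B \ A = ⋃ c ∈ C, Desc T r c

lemma sep2_symm {A B : Set V} (h : IsSeparation2 G A B) : IsSeparation2 G B A := by
  obtain ⟨⟨h1, h2, h3, h4⟩, h5⟩ := h
  exact ⟨⟨by rw [Set.union_comm]; exact h1, h3, h2,
    fun u hu v hv hadj => h4 v hv u hu hadj.symm⟩, by rw [Set.inter_comm]; exact h5⟩

lemma type2_symm {A B : Set V} (h : IsType2Sep G T r A B) : IsType2Sep G T r B A := by
  obtain ⟨h1, a, b, h2, h3, h4, h5, h6⟩ := h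
  exact ⟨sep2_symm h1, a, b, by rw [Set.inter_comm]; exact h2, h3, h4, h5, h6.symm⟩

lemma type1_symm {A B : Set V} (h : IsType1Sep G T r A B) : IsType1Sep G T r B A :=
  ⟨sep2_symm h.1, fun h2 => h.2 (type2_symm h2)⟩

lemma halfconn_symm {A B : Set V} (h : HalfConnected G A B) : HalfConnected G B A :=
  h.symm

lemma nested_swap_right {A B C D : Set V} (h : Nested A B C D) : Nested A B D C := by
  unfold Nested at *; tauto

lemma nested_swap_left {A B C D : Set V} (h : Nested A B C D) : Nested B A C D := by
  unfold Nested at *; tauto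

lemma exists_pure_aux (hG : TwoConnected G) (hT : IsNormalSpanningTree G T r)
    (hnum : CompatibleNumbering G T r num lwpt1 lwpt2) {A B : Set V}
    (h1 : IsType1Sep G T r A B) (hrA : r ∈ A) :
    ∃ a b C, PureStruct G T r a b C A B ∨ PureStruct G T r a b C B A := by
  obtain ⟨⟨hsep, hcard⟩, hnT2⟩ := h1
  obtain ⟨hunion, hABne, hBAne, hadj⟩ := hsep
  obtain ⟨a0, b0, hab0ne, hset⟩ := Set.ncard_eq_two.mp hcard
  have huniv : ∀ x : V, x ∈ A ∨ x ∈ B := by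
    intro x
    have : x ∈ A ∪ B := by rw [hunion]; trivial
    exact this
  -- generic edge lemmas
  have hedgeBgen : ∀ x ∈ B \ A, ∀ y, G.Adj x y → y ∈ B \ A ∨ y ∈ A ∩ B := by
    intro x hx y hxy
    by_cases hyA : y ∈ A
    · by_cases hyB : y ∈ B
      · exact Or.inr ⟨hyA, hyB⟩
      · exact absurd hxy.symm (hadj y ⟨hyA, hyB⟩ x hx)
    · exact Or.inl ⟨(huniv y).resolve_left hyA, hyA⟩
  have hedgeAgen : ∀ x ∈ A \ B, ∀ y, G.Adj x y → y ∈ A \ B ∨ y ∈ A ∩ B := by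
    intro x hx y hxy
    by_cases hyB : y ∈ B
    · by_cases hyA : y ∈ A
      · exact Or.inr ⟨hyA, hyB⟩
      · exact absurd hxy (hadj x hx y ⟨hyB, hyA⟩)
    · exact Or.inl ⟨(huniv y).resolve_right hyB, hyB⟩
  have hedgeB : ∀ x ∈ B \ A, ∀ y, G.Adj x y → y ∈ B \ A ∨ y = a0 ∨ y = b0 := by
    intro x hx y hxy
    rcases hedgeBgen x hx y hxy with h | h
    · exact Or.inl h
    · right; rw [hset] at h; simpa using h
  have hrBA : r ∉ B \ A := fun h => h.2 hrA
  -- Step 1 : comparability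
  obtain ⟨m, hmBA, hmmin⟩ := exists_num_min hBAne
  have hmr : m ≠ r := fun he => hrBA (he ▸ hmBA)
  obtain ⟨p, hp1, hp2⟩ := exists_parent hT.1 hmr
  have hpBA : p ∉ B \ A := fun h =>
    absurd (anc_num_lt hnum hp2 hp1.ne) (not_lt.mpr (hmmin p h))
  have hmstrong : ∀ x, Anc T r x m → x ≠ m → x ∉ B \ A := fun x hxm hxne h =>
    absurd (anc_num_lt hnum hxm hxne) (not_lt.mpr (hmmin x h))
  have hpab : p = a0 ∨ p = b0 := by
    rcases hedgeB m hmBA p (hT.2.1 hp1).symm with h | h | h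
    · exact absurd h hpBA
    · exact Or.inl h
    · exact Or.inr h
  obtain ⟨s, hps_ne, hpair⟩ : ∃ s, p ≠ s ∧ ({p, s} : Set V) = {a0, b0} := by
    rcases hpab with h | h
    · exact ⟨b0, by rw [h]; exact hab0ne, by rw [h]⟩
    · exact ⟨a0, by rw [h]; exact hab0ne.symm, by rw [h, Set.pair_comm]⟩
  have hstep1 : ∃ a b, Anc T r a b ∧ a ≠ b ∧ A ∩ B = {a, b} := by
    by_cases hsd : s ∈ Desc T r m
    · exact ⟨p, s, anc_trans hT.1 hp2 hsd, hps_ne, by rw [hset, ← hpair]⟩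
    · have hpnd : p ∉ Desc T r m := fun h => hp1.ne (anc_antisymm hT.1 hp2 h)
      have hcl_a0 : a0 ∉ Desc T r m := by
        intro h
        have : a0 = p ∨ a0 = s := by
          have : a0 ∈ ({p, s} : Set V) := by rw [hpair]; simp
          simpa using this
        rcases this with he | he
        · exact hpnd (he ▸ h)
        · exact hsd (he ▸ h)
      have hcl_b0 : b0 ∉ Desc T r m := by
        intro h
        have : b0 = p ∨ b0 = s := by
          have : b0 ∈ ({p, s} : Set V) := by rw [hpair]; simp
          simpa using this
        rcases this with he | he
        · exact hpnd (he ▸ h)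
        · exact hsd (he ▸ h)
      have hdesc : Desc T r m ⊆ B \ A :=
        desc_subset_side hT hnum hedgeB hrBA hmBA hcl_a0 hcl_b0
      obtain ⟨x, y, hx, hynd, hyq, hadjxy, hym, hymne⟩ :=
        exit_desc (q := p) (t := s) hG hT hp1.ne.symm (Ne.symm hps_ne) hsd
      have hyBA : y ∉ B \ A := hmstrong y hym hymne
      have hys : y = s := by
        rcases hedgeB x (hdesc hx) y hadjxy with h | h | h
        · exact absurd h hyBA
        · -- y = a0 : a0 = p or s ; y ≠ p
          have : a0 = p ∨ a0 = s := by
            have : a0 ∈ ({p, s} : Set V) := by rw [hpair]; simp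
            simpa using this
          rcases this with he | he
          · exact absurd (h.trans he) hyq
          · exact h.trans he
        · have : b0 = p ∨ b0 = s := by
            have : b0 ∈ ({p, s} : Set V) := by rw [hpair]; simp
            simpa using this
          rcases this with he | he
          · exact absurd (h.trans he) hyq
          · exact h.trans he
      subst hys
      rcases anc_concat_max hT.1 hp1 hp2 y hym with h1 | h1
      · exact absurd h1 hymne
      · exact ⟨y, p, h1, hps_ne.symm, by rw [hset, ← hpair, Set.pair_comm]⟩
  obtain ⟨a, b, hab, habne, hsetab⟩ := hstep1
  have hamem : a ∈ A ∩ B := by rw [hsetab]; simp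
  have hbmem : b ∈ A ∩ B := by rw [hsetab]; simp
  have hedgeB' : ∀ x ∈ B \ A, ∀ y, G.Adj x y → y ∈ B \ A ∨ y = a ∨ y = b := by
    intro x hx y hxy
    rcases hedgeBgen x hx y hxy with h | h
    · exact Or.inl h
    · right; rw [hsetab] at h; simpa using h
  have hedgeA' : ∀ x ∈ A \ B, ∀ y, G.Adj x y → y ∈ A \ B ∨ y = a ∨ y = b := by
    intro x hx y hxy
    rcases hedgeAgen x hx y hxy with h | h
    · exact Or.inl h
    · right; rw [hsetab] at h; simpa using h
  have haBA : a ∉ B \ A := fun h => h.2 hamem.1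
  have hbBA : b ∉ B \ A := fun h => h.2 hbmem.1
  have haAB : a ∉ A \ B := fun h => h.2 hamem.2
  have hbAB : b ∉ A \ B := fun h => h.2 hbmem.2
  by_cases htop : ∃ v ∈ B \ A, v ∈ Topen T r a b
  · obtain ⟨v0, hv0S, hv0T⟩ := htop
    have htopsub : Topen T r a b ⊆ B \ A := topen_side hT hnum hedgeB' hbBA hv0S hv0T
    by_cases hra : r = a
    · -- pure side is A \ B
      have hrAB : r ∉ A \ B := fun h => h.2 (hra ▸ hamem).2
      have hT2 : ∀ v ∈ A \ B, v ∉ Topen T r a b := fun v hv hvT => (htopsub hvT).2 hv.1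
      have hpure := pure_side hG hT hnum hab habne haAB hbAB hrAB hedgeA' hT2
      refine ⟨a, b, {c | (T.Adj b c ∧ Anc T r b c) ∧ c ∈ A \ B}, Or.inr ?_⟩
      refine ⟨by rw [Set.inter_comm]; exact hsetab, hab, habne, ?_,
        fun c hc => hc.1, hpure⟩
      obtain ⟨w, hw⟩ := hABne
      have := hpure ▸ hw
      simp only [Set.mem_iUnion] at this
      obtain ⟨c, hc, -⟩ := this
      exact ⟨c, hc⟩
    · -- type-2 contradiction
      exfalso
      have hrb : r ≠ b := by
        intro he
        have h2 : a = r := anc_antisymm hT.1 (he ▸ hab) (anc_root a)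
        exact habne (h2.trans he)
      have hrAB : r ∈ A \ B := by
        refine ⟨hrA, fun hrB => ?_⟩
        have : r ∈ ({a, b} : Set V) := hsetab ▸ ⟨hrA, hrB⟩
        rcases (by simpa using this : r = a ∨ r = b) with h | h
        · exact hra h
        · exact hrb h
      exact hnT2 ⟨⟨⟨hunion, hABne, hBAne, hadj⟩, hcard⟩, a, b, hsetab, hra, hrb,
        ⟨v0, hv0T⟩, Or.inl ⟨hrAB, htopsub⟩⟩
  · -- pure side is B \ A
    have hT2 : ∀ v ∈ B \ A, v ∉ Topen T r a b := fun v hv hvT => htop ⟨v, hv, hvT⟩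
    have hpure := pure_side hG hT hnum hab habne haBA hbBA hrBA hedgeB' hT2
    refine ⟨a, b, {c | (T.Adj b c ∧ Anc T r b c) ∧ c ∈ B \ A}, Or.inl ?_⟩
    refine ⟨hsetab, hab, habne, ?_, fun c hc => hc.1, hpure⟩
    obtain ⟨w, hw⟩ := hBAne
    have := hpure ▸ hw
    simp only [Set.mem_iUnion] at this
    obtain ⟨c, hc, -⟩ := this
    exact ⟨c, hc⟩

lemma exists_pure (hG : TwoConnected G) (hT : IsNormalSpanningTree G T r)
    (hnum : CompatibleNumbering G T r num lwpt1 lwpt2) {A B : Set V}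
    (h1 : IsType1Sep G T r A B) :
    ∃ a b C, PureStruct G T r a b C A B ∨ PureStruct G T r a b C B A := by
  have huniv : r ∈ A ∪ B := by rw [h1.1.1.1]; trivial
  rcases huniv with hrA | hrB
  · exact exists_pure_aux hG hT hnum h1 hrA
  · obtain ⟨a, b, C, h⟩ := exists_pure_aux hG hT hnum (type1_symm h1) hrB
    exact ⟨a, b, C, h.symm⟩

end Main3
end T1
namespace T1
section Main4
open SimpleGraph Walk

variable {V : Type*} [Fintype V] {G T : SimpleGraph V} {r : V}
  {num : V → ℕ} {lwpt1 lwpt2 : V → V}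

lemma pure_attach (hG : TwoConnected G) (hT : IsNormalSpanningTree G T r)
    {A B : Set V} {a b : V} {C : Set V}
    (hsep : IsSeparation G A B) (hsetab : A ∩ B = {a, b})
    (hab : Anc T r a b) (habne : a ≠ b)
    (hpC : ∀ c ∈ C, T.Adj b c ∧ Anc T r b c)
    (hD : B \ A = ⋃ c ∈ C, Desc T r c)
    {c : V} (hc : c ∈ C) :
    ∃ w, w ∈ Desc T r c ∧ G.Adj a w := by
  obtain ⟨hc1, hc2⟩ := hpC c hc
  have hbnd : b ∉ Desc T r c := fun h => hc1.ne (anc_antisymm hT.1 hc2 h)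
  have hand : a ∉ Desc T r c := fun h =>
    habne (anc_antisymm hT.1 hab (anc_trans hT.1 hc2 h))
  have hDc : Desc T r c ⊆ B \ A := by
    rw [hD]; intro x hx; simp only [Set.mem_iUnion]; exact ⟨c, hc, hx⟩
  have huniv : ∀ x : V, x ∈ A ∨ x ∈ B := by
    intro x
    have : x ∈ A ∪ B := by rw [hsep.1]; trivial
    exact this
  have hedgeB : ∀ x ∈ B \ A, ∀ y, G.Adj x y → y ∈ B \ A ∨ y = a ∨ y = b := by
    intro x hx y hxy
    by_cases hyA : y ∈ A
    · by_cases hyB : y ∈ B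
      · right
        have : y ∈ ({a, b} : Set V) := hsetab ▸ ⟨hyA, hyB⟩
        simpa using this
      · exact absurd hxy.symm (hsep.2.2.2 y ⟨hyA, hyB⟩ x hx)
    · exact Or.inl ⟨(huniv y).resolve_left hyA, hyA⟩
  obtain ⟨x, y, hx, hynd, hyb, hadjxy, hyc, hycne⟩ :=
    exit_desc (q := b) (t := a) hG hT hc1.ne.symm habne hand
  rcases hedgeB x (hDc hx) y hadjxy with h | h | h
  · exfalso
    rw [hD] at h
    simp only [Set.mem_iUnion] at h
    obtain ⟨c2, hc2C, hyc2⟩ := h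
    have hyb' : Anc T r y b :=
      (anc_concat_max hT.1 hc1 hc2 y hyc).resolve_left hycne
    have : c2 = b := anc_antisymm hT.1 (anc_trans hT.1 hyc2 hyb') (hpC c2 hc2C).2
    exact (hpC c2 hc2C).1.ne this.symm
  · exact ⟨x, hx, h ▸ hadjxy.symm⟩
  · exact absurd h hyb

lemma sub_nested (hG : TwoConnected G) (hT : IsNormalSpanningTree G T r)
    {A B A' B' : Set V} {a b a' b' : V} {C C' : Set V}
    (hsep : IsSeparation2 G A B) (hsep' : IsSeparation2 G A' B')
    (hp : PureStruct G T r a b C A B) (hp' : PureStruct G T r a' b' C' A' B')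
    (hsub : B \ A ⊆ B' \ A') : B ⊆ B' ∧ A' ⊆ A := by
  obtain ⟨hsetab, hab, habne, hCne, hpC, hD⟩ := hp
  obtain ⟨hsetab', hab', habne', hCne', hpC', hD'⟩ := hp'
  have huniv : ∀ x : V, x ∈ A ∨ x ∈ B := by
    intro x
    have : x ∈ A ∪ B := by rw [hsep.1.1]; trivial
    exact this
  have huniv' : ∀ x : V, x ∈ A' ∨ x ∈ B' := by
    intro x
    have : x ∈ A' ∪ B' := by rw [hsep'.1.1]; trivial
    exact this
  constructor
  · -- B ⊆ B'
    intro x hx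
    by_cases hxA : x ∈ A
    · have hxab : x = a ∨ x = b := by
        have : x ∈ ({a, b} : Set V) := hsetab ▸ ⟨hxA, hx⟩
        simpa using this
      obtain ⟨c, hc⟩ := hCne
      have hcD' : c ∈ B' \ A' := hsub (by
        rw [hD]; simp only [Set.mem_iUnion]; exact ⟨c, hc, anc_refl c⟩)
      have hbB' : b ∈ B' := by
        rw [hD'] at hcD'
        simp only [Set.mem_iUnion] at hcD'
        obtain ⟨c'', hc''C, hcc''⟩ := hcD'
        by_cases hee : c'' = c
        · have : b = b' := parent_unique hT.1 (hpC c hc).1 (hpC c hc).2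
            (hee ▸ (hpC' c'' hc''C).1) (hee ▸ (hpC' c'' hc''C).2)
          exact this ▸ (hsetab' ▸ (by simp : b' ∈ ({a', b'} : Set V)) : b' ∈ A' ∩ B').2
        · have hanc : Anc T r c'' b :=
            (anc_concat_max hT.1 (hpC c hc).1 (hpC c hc).2 c'' hcc'').resolve_left hee
          have : b ∈ B' \ A' := by
            rw [hD']
            simp only [Set.mem_iUnion]
            exact ⟨c'', hc''C, hanc⟩
          exact this.1
      rcases hxab with he | he
      · -- x = a : use attachment
        subst he
        obtain ⟨w, hw1, hw2⟩ := pure_attach hG hT hsep.1 hsetab hab habne hpC hD hc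
        have hwD' : w ∈ B' \ A' := hsub (by
          rw [hD]; simp only [Set.mem_iUnion]; exact ⟨c, hc, hw1⟩)
        by_cases hxB' : x ∈ B'
        · exact hxB'
        · exact absurd hw2 (hsep'.1.2.2.2 x ⟨(huniv' x).resolve_right hxB', hxB'⟩ w hwD')
      · exact he ▸ hbB'
    · exact (hsub ⟨hx, hxA⟩).1
  · -- A' ⊆ A
    intro x hx
    by_cases hxA : x ∈ A
    · exact hxA
    · exfalso
      exact (hsub ⟨(huniv x).resolve_left hxA, hxA⟩).2 hx

lemma nested_of_pure (hG : TwoConnected G) (hT : IsNormalSpanningTree G T r)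
    {A B A' B' : Set V} {a b a' b' : V} {C C' : Set V}
    (hsep : IsSeparation2 G A B) (hsep' : IsSeparation2 G A' B')
    (hp : PureStruct G T r a b C A B) (hp' : PureStruct G T r a' b' C' A' B')
    (hhc : HalfConnected G A B) :
    Nested A B A' B' := by
  by_cases hsub : B \ A ⊆ B' \ A'
  · exact Or.inr (Or.inr (Or.inr (sub_nested hG hT hsep hsep' hp hp' hsub)))
  by_cases hsub' : B' \ A' ⊆ B \ A
  · obtain ⟨h1, h2⟩ := sub_nested hG hT hsep' hsep hp' hp hsub'
    exact Or.inl ⟨h2, h1⟩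
  obtain ⟨hsetab, hab, habne, hCne, hpC, hD⟩ := hp
  obtain ⟨hsetab', hab', habne', hCne', hpC', hD'⟩ := hp'
  have huniv : ∀ x : V, x ∈ A ∨ x ∈ B := by
    intro x
    have : x ∈ A ∪ B := by rw [hsep.1.1]; trivial
    exact this
  have huniv' : ∀ x : V, x ∈ A' ∨ x ∈ B' := by
    intro x
    have : x ∈ A' ∪ B' := by rw [hsep'.1.1]; trivial
    exact this
  have memD : ∀ x ∈ B \ A, ∃ c ∈ C, x ∈ Desc T r c := by
    intro x hx; rw [hD] at hx; simp only [Set.mem_iUnion] at hx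
    obtain ⟨cc, h1, h2⟩ := hx; exact ⟨cc, h1, h2⟩
  have memD' : ∀ x ∈ B' \ A', ∃ c ∈ C', x ∈ Desc T r c := by
    intro x hx; rw [hD'] at hx; simp only [Set.mem_iUnion] at hx
    obtain ⟨cc, h1, h2⟩ := hx; exact ⟨cc, h1, h2⟩
  have descD : ∀ c ∈ C, Desc T r c ⊆ B \ A := by
    intro c hc x hx; rw [hD]; simp only [Set.mem_iUnion]; exact ⟨c, hc, hx⟩
  have descD' : ∀ c ∈ C', Desc T r c ⊆ B' \ A' := by
    intro c hc x hx; rw [hD']; simp only [Set.mem_iUnion]; exact ⟨c, hc, hx⟩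
  by_cases hdisj : ∀ x ∈ B \ A, x ∉ B' \ A'
  · -- disjoint case
    have hbnot : b ∉ B' \ A' := by
      intro hbD'
      obtain ⟨c'', hc''C, hbc''⟩ := memD' b hbD'
      obtain ⟨c, hc⟩ := hCne
      have : c ∈ B' \ A' := descD' c'' hc''C (anc_trans hT.1 hbc'' (hpC c hc).2)
      exact hdisj c (descD c hc (anc_refl c)) this
    have hanot : a ∉ B' \ A' := by
      intro haD'
      obtain ⟨c'', hc''C, hac''⟩ := memD' a haD'
      apply hbnot
      exact descD' c'' hc''C (anc_trans hT.1 hac'' hab)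
    have hbnot' : b' ∉ B \ A := by
      intro hbD
      obtain ⟨c, hcC, hbc⟩ := memD b' hbD
      obtain ⟨c', hc'⟩ := hCne'
      have : c' ∈ B \ A := descD c hcC (anc_trans hT.1 hbc (hpC' c' hc').2)
      exact hdisj c' this (descD' c' hc' (anc_refl c'))
    have hanot' : a' ∉ B \ A := by
      intro haD
      obtain ⟨c, hcC, hac⟩ := memD a' haD
      apply hbnot'
      exact descD c hcC (anc_trans hT.1 hac hab')
    refine Or.inr (Or.inr (Or.inl ⟨?_, ?_⟩))
    · -- B ⊆ A'
      intro x hx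
      have hxn : x ∉ B' \ A' := by
        by_cases hxA : x ∈ A
        · have : x = a ∨ x = b := by
            have : x ∈ ({a, b} : Set V) := hsetab ▸ ⟨hxA, hx⟩
            simpa using this
          rcases this with he | he
          · exact he ▸ hanot
          · exact he ▸ hbnot
        · exact hdisj x ⟨hx, hxA⟩
      rcases huniv' x with h | h
      · exact h
      · by_contra hxA'
        exact hxn ⟨h, hxA'⟩
    · -- B' ⊆ A
      intro x hx
      have hxn : x ∉ B \ A := by
        by_cases hxA' : x ∈ A'
        · have : x = a' ∨ x = b' := by
            have : x ∈ ({a', b'} : Set V) := hsetab' ▸ ⟨hxA', hx⟩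
            simpa using this
          rcases this with he | he
          · exact he ▸ hanot'
          · exact he ▸ hbnot'
        · exact fun hxBA => hdisj x hxBA ⟨hx, hxA'⟩
      rcases huniv x with h | h
      · exact h
      · by_contra hxA
        exact hxn ⟨h, hxA⟩
  · -- crossing case
    push_neg at hdisj
    obtain ⟨x0, hx0D, hx0D'⟩ := hdisj
    obtain ⟨c, hcC, hx0c⟩ := memD x0 hx0D
    obtain ⟨c', hc'C, hx0c'⟩ := memD' x0 hx0D'
    have hcc' : c = c' := by
      rcases anc_total hT.1 hx0c hx0c' with h | h
      · by_cases hee : c = c'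
        · exact hee
        · exfalso
          have hcb' : Anc T r c b' :=
            (anc_concat_max hT.1 (hpC' c' hc'C).1 (hpC' c' hc'C).2 c h).resolve_left hee
          apply hsub'
          intro z hz
          obtain ⟨c'', hc''C, hzc''⟩ := memD' z hz
          exact descD c hcC (anc_trans hT.1 (anc_trans hT.1 hcb' (hpC' c'' hc''C).2) hzc'')
      · by_cases hee : c' = c
        · exact hee.symm
        · exfalso
          have hcb : Anc T r c' b :=
            (anc_concat_max hT.1 (hpC c hcC).1 (hpC c hcC).2 c' h).resolve_left hee
          apply hsub
          intro z hz
          obtain ⟨c'', hc''C, hzc''⟩ := memD z hz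
          exact descD' c' hc'C (anc_trans hT.1 (anc_trans hT.1 hcb (hpC c'' hc''C).2) hzc'')
    subst hcc'
    -- so c ∈ C ∩ C'
    have hbb' : b = b' := parent_unique hT.1 (hpC c hcC).1 (hpC c hcC).2
      (hpC' c hc'C).1 (hpC' c hc'C).2
    have haa' : a = a' := by
      obtain ⟨w, hw1, hw2⟩ := pure_attach hG hT hsep.1 hsetab hab habne hpC hD hcC
      have hwD' : w ∈ B' \ A' := descD' c hc'C hw1
      have haB' : a ∈ B' := by
        by_cases hxB' : a ∈ B'
        · exact hxB'
        · exact absurd hw2 (hsep'.1.2.2.2 a ⟨(huniv' a).resolve_right hxB', hxB'⟩ w hwD')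
      have hanD' : a ∉ B' \ A' := by
        intro haD'
        obtain ⟨c'', hc''C, hac''⟩ := memD' a haD'
        have h1 : Anc T r c'' b := anc_trans hT.1 hac'' hab
        have h2 : b = c'' := anc_antisymm hT.1 (hbb' ▸ (hpC' c'' hc''C).2) h1
        exact habne (anc_antisymm hT.1 hab (h2 ▸ hac''))
      have haA' : a ∈ A' := by
        rcases huniv' a with h | h
        · exact h
        · by_contra hc2
          exact hanD' ⟨h, hc2⟩
      have : a ∈ ({a', b'} : Set V) := hsetab' ▸ ⟨haA', haB'⟩
      rcases (by simpa using this : a = a' ∨ a = b') with h | h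
      · exact h
      · exact absurd (h.trans hbb'.symm) habne
    -- c1 ∈ C with subtree disjoint from B'\A'
    obtain ⟨w1, hw1D, hw1nD'⟩ := Set.not_subset.mp hsub
    obtain ⟨c1, hc1C, hw1c1⟩ := memD w1 hw1D
    have hdisj1 : ∀ z ∈ Desc T r c1, z ∉ B' \ A' := by
      intro z hz hz'
      obtain ⟨c'', hc''C, hzc''⟩ := memD' z hz'
      have : c1 = c'' := sibling_eq hT.1 (hpC c1 hc1C).1 (hpC c1 hc1C).2
        (hbb' ▸ (hpC' c'' hc''C).1) (hbb' ▸ (hpC' c'' hc''C).2) hz hzc''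
      exact hw1nD' (descD' c'' hc''C (this ▸ hw1c1))
    have hc1ne : c1 ≠ c := fun he =>
      hdisj1 c (he ▸ anc_refl c) (descD' c hc'C (anc_refl c))
    -- c0' ∈ C' with subtree disjoint from B\A
    obtain ⟨w0, hw0D', hw0nD⟩ := Set.not_subset.mp hsub'
    obtain ⟨c0', hc0'C, hw0c0'⟩ := memD' w0 hw0D'
    have hdisj0 : ∀ z ∈ Desc T r c0', z ∉ B \ A := by
      intro z hz hz'
      obtain ⟨c'', hc''C, hzc''⟩ := memD z hz'
      have : c0' = c'' := sibling_eq hT.1 (hbb' ▸ (hpC' c0' hc0'C).1)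
        (hbb' ▸ (hpC' c0' hc0'C).2) (hpC c'' hc''C).1 (hpC c'' hc''C).2 hz hzc''
      exact hw0nD (descD c'' hc''C (this ▸ hw0c0'))
    have hc0'ne : c0' ≠ c := fun he =>
      hdisj0 c (he ▸ anc_refl c) (descD c hcC (anc_refl c))
    rcases hhc with hABconn | hBAconn
    · -- A \ B connected : nesting via c0'
      have hc0'AB : c0' ∈ A \ B := by
        have hc0'nB : c0' ∉ B := by
          intro hB
          by_cases hxA : c0' ∈ A
          · have : c0' = a ∨ c0' = b := by
              have : c0' ∈ ({a, b} : Set V) := hsetab ▸ ⟨hxA, hB⟩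
              simpa using this
            rcases this with he | he
            · -- c0' = a : then Anc b a with hab gives a = b
              have : Anc T r b c0' := hbb' ▸ (hpC' c0' hc0'C).2
              exact habne (anc_antisymm hT.1 hab (he ▸ this))
            · exact (hbb' ▸ (hpC' c0' hc0'C).1).ne he.symm
          · exact hdisj0 c0' (anc_refl c0') ⟨hB, hxA⟩
        exact ⟨(huniv c0').resolve_right hc0'nB, hc0'nB⟩
      have hsubAB : ∀ v ∈ A \ B, v ∈ Desc T r c0' := by
        intro v hv
        by_contra hvn
        obtain ⟨x, y, hadjxy, hxW, hyW, hPx, hPy⟩ :=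
          cross hABconn hc0'AB hv (fun z => z ∈ Desc T r c0') (anc_refl c0') hvn
        have hxD' : x ∈ B' \ A' := descD' c0' hc0'C hPx
        have hyB' : y ∈ B' := by
          by_cases hyB' : y ∈ B'
          · exact hyB'
          · exact absurd hadjxy.symm
              (hsep'.1.2.2.2 y ⟨(huniv' y).resolve_right hyB', hyB'⟩ x hxD')
        by_cases hyA' : y ∈ A'
        · have : y = a' ∨ y = b' := by
            have : y ∈ ({a', b'} : Set V) := hsetab' ▸ ⟨hyA', hyB'⟩
            simpa using this
          rcases this with he | he
          · exact hyW.2 (he ▸ haa' ▸ (hsetab ▸ (by simp : a ∈ ({a,b} : Set V))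
              : a ∈ A ∩ B).2)
          · exact hyW.2 (he ▸ hbb' ▸ (hsetab ▸ (by simp : b ∈ ({a,b} : Set V))
              : b ∈ A ∩ B).2)
        · obtain ⟨c'', hc''C, hyc''⟩ := memD' y ⟨hyB', hyA'⟩
          have hne'' : c0' ≠ c'' := fun he => hPy (he ▸ hyc'')
          exact sibling_no_edge hT hne'' ((hpC' c0' hc0'C).1) ((hpC' c0' hc0'C).2)
            ((hpC' c'' hc''C).1) ((hpC' c'' hc''C).2) hPx hyc'' hadjxy
      refine Or.inr (Or.inl ⟨?_, ?_⟩)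
      · -- A ⊆ B'
        intro x hx
        by_cases hxB : x ∈ B
        · have : x = a ∨ x = b := by
            have : x ∈ ({a, b} : Set V) := hsetab ▸ ⟨hx, hxB⟩
            simpa using this
          rcases this with he | he
          · exact he ▸ haa' ▸ (hsetab' ▸ (by simp : a' ∈ ({a',b'} : Set V))
              : a' ∈ A' ∩ B').2
          · exact he ▸ hbb' ▸ (hsetab' ▸ (by simp : b' ∈ ({a',b'} : Set V))
              : b' ∈ A' ∩ B').2
        · exact (descD' c0' hc0'C (hsubAB x ⟨hx, hxB⟩)).1
      · -- A' ⊆ B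
        intro x hx
        by_cases hxB : x ∈ B
        · exact hxB
        · exfalso
          have hxAB : x ∈ A \ B := ⟨(huniv x).resolve_right hxB, hxB⟩
          exact (descD' c0' hc0'C (hsubAB x hxAB)).2 hx
    · -- B \ A connected : contradiction
      exfalso
      have hc1D : c1 ∈ B \ A := descD c1 hc1C (anc_refl c1)
      have hcD : c ∈ B \ A := descD c hcC (anc_refl c)
      have hPc : c ∉ Desc T r c1 := by
        intro h
        exact hc1ne (sibling_eq hT.1 (hpC c1 hc1C).1 (hpC c1 hc1C).2
          (hpC c hcC).1 (hpC c hcC).2 h (anc_refl c))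
      obtain ⟨x, y, hadjxy, hxW, hyW, hPx, hPy⟩ :=
        cross hBAconn hc1D hcD (fun z => z ∈ Desc T r c1) (anc_refl c1) hPc
      obtain ⟨c2, hc2C, hyc2⟩ := memD y hyW
      have hne2 : c1 ≠ c2 := fun he => hPy (he ▸ hyc2)
      exact sibling_no_edge hT hne2 ((hpC c1 hc1C).1) ((hpC c1 hc1C).2)
        ((hpC c2 hc2C).1) ((hpC c2 hc2C).2) hPx hyc2 hadjxy

end Main4
end T1
/-- A half-connected type-1 separation is nested with every type-1 separation. -/
theorem type1_nested [Fintype V] (G T : SimpleGraph V) (r : V)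
    (num : V → ℕ) (lwpt1 lwpt2 : V → V)
    (hG : TwoConnected G) (hT : IsNormalSpanningTree G T r)
    (hnum : CompatibleNumbering G T r num lwpt1 lwpt2)
    (A B A' B' : Set V)
    (h1 : IsType1Sep G T r A B) (hhc : HalfConnected G A B)
    (h2 : IsType1Sep G T r A' B') :
    Nested A B A' B' := by
  obtain ⟨a, b, C, hP⟩ := T1.exists_pure hG hT hnum h1
  obtain ⟨a', b', C', hP'⟩ := T1.exists_pure hG hT hnum h2
  rcases hP with h | h <;> rcases hP' with h' | h'
  · exact T1.nested_of_pure hG hT h1.1 h2.1 h h' hhc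
  · exact T1.nested_swap_right (T1.nested_of_pure hG hT h1.1 (T1.sep2_symm h2.1) h h' hhc)
  · exact T1.nested_swap_left (T1.nested_of_pure hG hT (T1.sep2_symm h1.1) h2.1 h h'
      (T1.halfconn_symm hhc))
  · exact T1.nested_swap_left (T1.nested_swap_right (T1.nested_of_pure hG hT
      (T1.sep2_symm h1.1) (T1.sep2_symm h2.1) h h' (T1.halfconn_symm hhc)))
end

section
/- Two 2-separations (A, B) and (C, D) of a 2-connected graph G cross if and only if either (A, B) separates the two vertices of C ∩ D while (C, D) separates the two vertices of A ∩ B, or A ∩ B = C ∩ D and there are four components H₁, H₂, H₃, H₄ of G − (A ∩ B) such that H₁, H₂ ⊆ G[A], H₃, H₄ ⊆ G[B], H₁, H₃ ⊆ G[C], and H₂, H₄ ⊆ G[D]. -/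
open SimpleGraph

variable {V : Type*}

section CrossingAux

variable {G : SimpleGraph V} {A B C D : Set V} {a b c d : V}

lemma IsSeparation.symm2 (h : IsSeparation G A B) : IsSeparation G B A :=
  ⟨by rw [Set.union_comm]; exact h.1, h.2.2.1, h.2.1,
   fun u hu v hv hadj => h.2.2.2 v hv u hu hadj.symm⟩

lemma walk_side_all' (hsep : IsSeparation G A B) :
    ∀ {u v : V} (p : G.Walk u v), (∀ x ∈ p.support, x ∉ A ∩ B) → v ∈ B \ A →
      ∀ x ∈ p.support, x ∈ B \ A := by
  intro u v p
  induction p with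
  | nil =>
    intro _ hv x hx
    simp only [SimpleGraph.Walk.support_nil, List.mem_singleton] at hx
    subst hx; exact hv
  | @cons u w v h q ih =>
    intro hp hv x hx
    have hq : ∀ x ∈ q.support, x ∉ A ∩ B := fun x hx =>
      hp x (by simp [SimpleGraph.Walk.support_cons, hx])
    have hqall := ih hq hv
    rw [SimpleGraph.Walk.support_cons, List.mem_cons] at hx
    rcases hx with rfl | hx
    · have hw : w ∈ B \ A := hqall w q.start_mem_support
      have hu : x ∉ A ∩ B := hp x (by simp)
      have huAB : x ∈ A ∪ B := by rw [hsep.1]; trivial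
      rcases huAB with hA | hB
      · exact absurd h (hsep.2.2.2 x ⟨hA, fun hB => hu ⟨hA, hB⟩⟩ w hw)
      · exact ⟨hB, fun hA => hu ⟨hA, hB⟩⟩
    · exact hqall x hx

lemma walk_side_all (hsep : IsSeparation G A B) {v : V} (hv : v ∈ B \ A)
    {u : V} (p : G.Walk u v) (hp : ∀ x ∈ p.support, x ∉ A ∩ B) :
    ∀ x ∈ p.support, x ∈ B \ A :=
  walk_side_all' hsep p hp hv

lemma reach_lemma [Fintype V] (hG : TwoConnected G) (hsep : IsSeparation G A B)
    (hab : A ∩ B = {a, b}) (hne : a ≠ b) {t : V} (ht : t ∈ B \ A) :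
    ∃ x, G.Adj a x ∧ x ∈ B \ A ∧ ∃ p : G.Walk x t, ∀ y ∈ p.support, y ∈ B \ A := by
  classical
  have haA : a ∈ A ∩ B := by rw [hab]; exact Set.mem_insert _ _
  have hbA : b ∈ A ∩ B := by rw [hab]; exact Set.mem_insert_iff.mpr (Or.inr rfl)
  have hta : t ≠ a := fun h => ht.2 (h ▸ haA.1)
  have htb : t ∈ {u : V | u ≠ b} := fun h => ht.2 (h ▸ hbA.1)
  have hamem : a ∈ {u : V | u ≠ b} := hne
  have hreach := (hG.2 b).preconnected ⟨a, hamem⟩ ⟨t, htb⟩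
  obtain ⟨w0⟩ := hreach
  obtain ⟨q0, hq0⟩ : ∃ q : (G.induce {u : V | u ≠ b}).Walk ⟨a, hamem⟩ ⟨t, htb⟩, q.IsPath :=
    ⟨w0.toPath, w0.toPath.2⟩
  have hne' : (⟨a, hamem⟩ : {u : V | u ≠ b}) ≠ ⟨t, htb⟩ := by
    intro h; exact hta (congrArg Subtype.val h).symm
  obtain ⟨x, hadj, q, rfl⟩ := SimpleGraph.Walk.exists_eq_cons_of_ne hne' q0
  rw [SimpleGraph.Walk.cons_isPath_iff] at hq0
  have hadj' : G.Adj a ↑x := hadj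
  let q' := q.map (SimpleGraph.Embedding.induce {u : V | u ≠ b}).toHom
  have hsup : ∀ y ∈ q'.support, y ∉ A ∩ B := by
    intro y hy hmem
    rw [SimpleGraph.Walk.support_map, List.mem_map] at hy
    obtain ⟨z, hz, rfl⟩ := hy
    rw [hab] at hmem
    rcases hmem with h | h
    · exact hq0.2 (by rwa [show z = ⟨a, hamem⟩ from Subtype.ext h] at hz)
    · exact z.2 h
  have hall := walk_side_all hsep ht q' hsup
  exact ⟨↑x, hadj', hall _ q'.start_mem_support, q', hall⟩

lemma side_nested [Fintype V] (hG : TwoConnected G) (hsAB : IsSeparation G A B)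
    (hsCD : IsSeparation G C D) (hab : A ∩ B = {a, b}) (hne : a ≠ b)
    (hcd : C ∩ D = {c, d}) (hc : c ∈ A) (hd : d ∈ A)
    (hBAC : B \ A ⊆ C \ D) : B ⊆ C ∧ D ⊆ A := by
  obtain ⟨v₀, hv₀⟩ := hsAB.2.2.1
  have haC : ∀ s s' : V, A ∩ B = {s, s'} → s ≠ s' → s ∈ C := by
    intro s s' h hss
    by_contra hsC
    obtain ⟨x, hadj, hxB, _⟩ := reach_lemma hG hsAB h hss hv₀
    have hxCD : x ∈ C \ D := hBAC hxB
    have hsD : s ∈ D \ C := by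
      have hm : s ∈ C ∪ D := by rw [hsCD.1]; trivial
      exact ⟨hm.resolve_left hsC, hsC⟩
    exact hsCD.2.2.2 x hxCD s hsD hadj.symm
  have haC' : a ∈ C := haC a b hab hne
  have hbC : b ∈ C := haC b a (by rw [hab, Set.pair_comm]) hne.symm
  constructor
  · intro z hz
    by_cases hzA : z ∈ A
    · have hm : z ∈ A ∩ B := ⟨hzA, hz⟩
      rw [hab] at hm
      rcases hm with rfl | rfl
      · exact haC'
      · exact hbC
    · exact (hBAC ⟨hz, hzA⟩).1
  · intro z hz
    by_cases hzC : z ∈ C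
    · have hm : z ∈ C ∩ D := ⟨hzC, hz⟩
      rw [hcd] at hm
      rcases hm with rfl | rfl
      · exact hc
      · exact hd
    · by_contra hzA
      have hm : z ∈ A ∪ B := by rw [hsAB.1]; trivial
      exact hzC (hBAC ⟨hm.resolve_left hzA, hzA⟩).1

lemma half_nested [Fintype V] (hG : TwoConnected G) (hsAB : IsSeparation G A B)
    (hsCD : IsSeparation G C D) (hab : A ∩ B = {a, b}) (hne : a ≠ b)
    (hcd : C ∩ D = {c, d}) (hS : ({a, b} : Set V) ≠ {c, d})
    (hc : c ∈ A) (hd : d ∈ A) : Nested A B C D := by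
  have hmem : ∀ v ∈ B \ A, v ∈ C \ D ∨ v ∈ D \ C := by
    intro v hv
    have h1 : v ∈ C ∪ D := by rw [hsCD.1]; trivial
    have h2 : v ∉ C ∩ D := by
      rw [hcd]; intro h
      rcases h with rfl | rfl
      · exact hv.2 hc
      · exact hv.2 hd
    rcases h1 with h | h
    · exact Or.inl ⟨h, fun hD => h2 ⟨h, hD⟩⟩
    · exact Or.inr ⟨h, fun hC => h2 ⟨hC, h⟩⟩
  by_cases hex : ∃ v ∈ B \ A, v ∈ D \ C
  · by_cases hex2 : ∃ v ∈ B \ A, v ∈ C \ D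
    · exfalso
      obtain ⟨v, hvB, hvCD⟩ := hex2
      obtain ⟨w, hwB, hwDC⟩ := hex
      have key : ∀ s s' : V, A ∩ B = {s, s'} → s ≠ s' → s ∈ C ∩ D := by
        intro s s' h hss
        have havoid : ∀ (p : G.Walk s s) , True := fun _ => trivial
        have h1 : s ∉ C \ D := by
          intro hsC
          obtain ⟨x, hadj, hxB, p, hp⟩ := reach_lemma hG hsAB h hss hwB
          have hp' : ∀ y ∈ p.support, y ∉ C ∩ D := by
            intro y hy hyC
            rw [hcd] at hyC
            rcases hyC with rfl | rfl
            · exact (hp y hy).2 hc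
            · exact (hp y hy).2 hd
          have hx : x ∈ D \ C := walk_side_all hsCD hwDC p hp' x p.start_mem_support
          exact hsCD.2.2.2 s hsC x hx hadj
        have h2 : s ∉ D \ C := by
          intro hsD
          obtain ⟨x, hadj, hxB, p, hp⟩ := reach_lemma hG hsAB h hss hvB
          have hp' : ∀ y ∈ p.support, y ∉ D ∩ C := by
            intro y hy hyC
            have : y ∈ C ∩ D := ⟨hyC.2, hyC.1⟩
            rw [hcd] at this
            rcases this with rfl | rfl
            · exact (hp y hy).2 hc
            · exact (hp y hy).2 hd
          have hx : x ∈ C \ D := walk_side_all hsCD.symm2 hvCD p hp' x p.start_mem_support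
          exact hsCD.2.2.2 x hx s hsD hadj.symm
        have h3 : s ∈ C ∪ D := by rw [hsCD.1]; trivial
        rcases h3 with h | h
        · exact ⟨h, by_contra fun hD => h1 ⟨h, hD⟩⟩
        · exact ⟨by_contra fun hC => h2 ⟨h, hC⟩, h⟩
      have hac : a ∈ ({c, d} : Set V) := hcd ▸ key a b hab hne
      have hbc : b ∈ ({c, d} : Set V) := hcd ▸ key b a (by rw [hab, Set.pair_comm]) hne.symm
      apply hS
      rcases hac with h1 | h1 <;> rcases hbc with h2 | h2
      · exact absurd (h1.trans h2.symm) hne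
      · rw [show a = c from h1, show b = d from h2]
      · rw [show a = d from h1, show b = c from h2, Set.pair_comm]
      · exact absurd (h1.trans h2.symm) hne
    · have hBD : B \ A ⊆ D \ C := fun v hv =>
        (hmem v hv).resolve_left (fun h => hex2 ⟨v, hv, h⟩)
      have hres := side_nested hG hsAB hsCD.symm2 hab hne
        (by rw [Set.inter_comm]; exact hcd) hc hd hBD
      exact Or.inr (Or.inr (Or.inr ⟨hres.1, hres.2⟩))
  · have hBC : B \ A ⊆ C \ D := fun v hv =>
      (hmem v hv).resolve_right (fun h => hex ⟨v, hv, h⟩)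
    have hres := side_nested hG hsAB hsCD hab hne hcd hc hd hBC
    exact Or.inr (Or.inr (Or.inl ⟨hres.1, hres.2⟩))

lemma notsep_nested [Fintype V] (hG : TwoConnected G) (hsAB : IsSeparation G A B)
    (hsCD : IsSeparation G C D) (hab : A ∩ B = {a, b}) (hne : a ≠ b)
    (hcd : C ∩ D = {c, d}) (hS : ({a, b} : Set V) ≠ {c, d})
    (hnsep : ¬ SepSeparates A B c d) : Nested A B C D := by
  have hcU : c ∈ A ∪ B := by rw [hsAB.1]; trivial
  have hdU : d ∈ A ∪ B := by rw [hsAB.1]; trivial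
  have hcase : (c ∈ A ∧ d ∈ A) ∨ (c ∈ B ∧ d ∈ B) := by
    unfold SepSeparates at hnsep
    by_cases hcA : c ∈ A
    · by_cases hdA : d ∈ A
      · exact Or.inl ⟨hcA, hdA⟩
      · have hdB : d ∈ B \ A := ⟨hdU.resolve_left hdA, hdA⟩
        by_cases hcB : c ∈ B
        · exact Or.inr ⟨hcB, hdB.1⟩
        · exact absurd (Or.inl ⟨⟨hcA, hcB⟩, hdB⟩) hnsep
    · have hcB : c ∈ B \ A := ⟨hcU.resolve_left hcA, hcA⟩
      by_cases hdB : d ∈ B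
      · exact Or.inr ⟨hcB.1, hdB⟩
      · have hdA : d ∈ A \ B := ⟨hdU.resolve_right hdB, hdB⟩
        exact absurd (Or.inr ⟨hcB, hdA⟩) hnsep
  rcases hcase with ⟨h1, h2⟩ | ⟨h1, h2⟩
  · exact half_nested hG hsAB hsCD hab hne hcd hS h1 h2
  · have hres := half_nested hG hsAB.symm2 hsCD
      (by rw [Set.inter_comm]; exact hab) hne hcd hS h1 h2
    unfold Nested at hres ⊢
    tauto

lemma corner_nonempty {A B C D : Set V} (hU1 : A ∪ B = Set.univ) (hU2 : C ∪ D = Set.univ)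
    (hE : A ∩ B = C ∩ D) (h : ¬(A ⊆ C ∧ D ⊆ B)) : ((A \ B) ∩ (D \ C)).Nonempty := by
  rw [Set.nonempty_iff_ne_empty]
  intro hemp
  apply h
  constructor
  · intro z hzA
    by_cases hzB : z ∈ B
    · have hm : z ∈ A ∩ B := ⟨hzA, hzB⟩
      rw [hE] at hm; exact hm.1
    · by_contra hzC
      have hzU : z ∈ C ∪ D := by rw [hU2]; trivial
      have : z ∈ (A \ B) ∩ (D \ C) := ⟨⟨hzA, hzB⟩, hzU.resolve_left hzC, hzC⟩
      rw [hemp] at this; exact this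
  · intro z hzD
    by_cases hzC : z ∈ C
    · have hm : z ∈ C ∩ D := ⟨hzC, hzD⟩
      rw [← hE] at hm; exact hm.2
    · by_contra hzB
      have hzU : z ∈ A ∪ B := by rw [hU1]; trivial
      have : z ∈ (A \ B) ∩ (D \ C) := ⟨⟨hzU.resolve_right hzB, hzB⟩, hzD, hzC⟩
      rw [hemp] at this; exact this

lemma comp_supp_side {s : Set V} (hsep : IsSeparation G A B)
    (hs : ∀ x ∈ s, x ∉ A ∩ B) {v : ↥s} (hv : ↑v ∈ B \ A) :
    Subtype.val '' ((G.induce s).connectedComponentMk v).supp ⊆ B \ A := by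
  rintro _ ⟨u, hu, rfl⟩
  rw [SimpleGraph.ConnectedComponent.mem_supp_iff] at hu
  have hreach : (G.induce s).Reachable u v := SimpleGraph.ConnectedComponent.exact hu
  obtain ⟨w⟩ := hreach
  let q := w.map (SimpleGraph.Embedding.induce s).toHom
  have hq : ∀ y ∈ q.support, y ∉ A ∩ B := by
    intro y hy
    rw [SimpleGraph.Walk.support_map, List.mem_map] at hy
    obtain ⟨z, _, rfl⟩ := hy
    exact hs _ z.2
  exact walk_side_all hsep hv q hq _ q.start_mem_support

end CrossingAux

/-- Crossing characterization for 2-separations of a 2-connected graph. -/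
theorem crossing_charac [Fintype V] (G : SimpleGraph V) (A B C D : Set V) (a b c d : V)
    (hG : TwoConnected G)
    (hAB : IsSeparation2 G A B) (hCD : IsSeparation2 G C D)
    (hab : A ∩ B = {a, b}) (hab' : a ≠ b)
    (hcd : C ∩ D = {c, d}) (hcd' : c ≠ d) :
    ¬ Nested A B C D ↔
      (SepSeparates A B c d ∧ SepSeparates C D a b) ∨
      (A ∩ B = C ∩ D ∧
        ∃ H₁ H₂ H₃ H₄ : (G.induce ((A ∩ B)ᶜ)).ConnectedComponent,
          H₁ ≠ H₂ ∧ H₁ ≠ H₃ ∧ H₁ ≠ H₄ ∧ H₂ ≠ H₃ ∧ H₂ ≠ H₄ ∧ H₃ ≠ H₄ ∧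
          Subtype.val '' H₁.supp ⊆ A ∧ Subtype.val '' H₂.supp ⊆ A ∧
          Subtype.val '' H₃.supp ⊆ B ∧ Subtype.val '' H₄.supp ⊆ B ∧
          Subtype.val '' H₁.supp ⊆ C ∧ Subtype.val '' H₂.supp ⊆ D ∧
          Subtype.val '' H₃.supp ⊆ C ∧ Subtype.val '' H₄.supp ⊆ D) := by
  have hsAB := hAB.1
  have hsCD := hCD.1
  constructor
  · intro hcross
    by_cases hE : A ∩ B = C ∩ D
    · right
      refine ⟨hE, ?_⟩
      have hn1 : ¬(A ⊆ C ∧ D ⊆ B) := fun h => hcross (Or.inl h)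
      have hn2 : ¬(A ⊆ D ∧ C ⊆ B) := fun h => hcross (Or.inr (Or.inl h))
      have hn3 : ¬(B ⊆ C ∧ D ⊆ A) := fun h => hcross (Or.inr (Or.inr (Or.inl h)))
      have hn4 : ¬(B ⊆ D ∧ C ⊆ A) := fun h => hcross (Or.inr (Or.inr (Or.inr h)))
      obtain ⟨v₂, hv₂⟩ := corner_nonempty hsAB.1 hsCD.1 hE hn1
      obtain ⟨v₁, hv₁⟩ := corner_nonempty hsAB.1 (by rw [Set.union_comm]; exact hsCD.1)
        (by rw [hE]; exact Set.inter_comm C D) hn2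
      obtain ⟨v₄, hv₄⟩ := corner_nonempty (by rw [Set.union_comm]; exact hsAB.1) hsCD.1
        (by rw [Set.inter_comm]; exact hE) hn3
      obtain ⟨v₃, hv₃⟩ := corner_nonempty (by rw [Set.union_comm]; exact hsAB.1)
        (by rw [Set.union_comm]; exact hsCD.1)
        (by rw [Set.inter_comm, hE]; exact Set.inter_comm C D) hn4
      have m1 : v₁ ∈ ((A ∩ B)ᶜ : Set V) := fun h => hv₁.1.2 h.2
      have m2 : v₂ ∈ ((A ∩ B)ᶜ : Set V) := fun h => hv₂.1.2 h.2
      have m3 : v₃ ∈ ((A ∩ B)ᶜ : Set V) := fun h => hv₃.1.2 h.1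
      have m4 : v₄ ∈ ((A ∩ B)ᶜ : Set V) := fun h => hv₄.1.2 h.1
      set s : Set V := ((A ∩ B)ᶜ : Set V) with hsdef
      have hsA : ∀ x ∈ s, x ∉ B ∩ A := fun x hx h => hx ⟨h.2, h.1⟩
      have hsAB' : ∀ x ∈ s, x ∉ A ∩ B := fun x hx h => hx h
      have hsCD' : ∀ x ∈ s, x ∉ C ∩ D := fun x hx h => hx (by rw [hE]; exact h)
      have hsDC : ∀ x ∈ s, x ∉ D ∩ C := fun x hx h => hx (by rw [hE]; exact ⟨h.2, h.1⟩)
      refine ⟨(G.induce s).connectedComponentMk ⟨v₁, m1⟩,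
        (G.induce s).connectedComponentMk ⟨v₂, m2⟩,
        (G.induce s).connectedComponentMk ⟨v₃, m3⟩,
        (G.induce s).connectedComponentMk ⟨v₄, m4⟩, ?_⟩
      have S1A := comp_supp_side (s := s) hsAB.symm2 hsA (v := ⟨v₁, m1⟩) hv₁.1
      have S1C := comp_supp_side (s := s) hsCD.symm2 hsDC (v := ⟨v₁, m1⟩) hv₁.2
      have S2A := comp_supp_side (s := s) hsAB.symm2 hsA (v := ⟨v₂, m2⟩) hv₂.1
      have S2D := comp_supp_side (s := s) hsCD hsCD' (v := ⟨v₂, m2⟩) hv₂.2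
      have S3B := comp_supp_side (s := s) hsAB hsAB' (v := ⟨v₃, m3⟩) hv₃.1
      have S3C := comp_supp_side (s := s) hsCD.symm2 hsDC (v := ⟨v₃, m3⟩) hv₃.2
      have S4B := comp_supp_side (s := s) hsAB hsAB' (v := ⟨v₄, m4⟩) hv₄.1
      have S4D := comp_supp_side (s := s) hsCD hsCD' (v := ⟨v₄, m4⟩) hv₄.2
      have mm1 : v₁ ∈ Subtype.val '' ((G.induce s).connectedComponentMk ⟨v₁, m1⟩).supp :=
        ⟨⟨v₁, m1⟩, rfl, rfl⟩
      have mm2 : v₂ ∈ Subtype.val '' ((G.induce s).connectedComponentMk ⟨v₂, m2⟩).supp :=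
        ⟨⟨v₂, m2⟩, rfl, rfl⟩
      have mm3 : v₃ ∈ Subtype.val '' ((G.induce s).connectedComponentMk ⟨v₃, m3⟩).supp :=
        ⟨⟨v₃, m3⟩, rfl, rfl⟩
      refine ⟨?_, ?_, ?_, ?_, ?_, ?_,
        S1A.trans Set.diff_subset, S2A.trans Set.diff_subset,
        S3B.trans Set.diff_subset, S4B.trans Set.diff_subset,
        S1C.trans Set.diff_subset, S2D.trans Set.diff_subset,
        S3C.trans Set.diff_subset, S4D.trans Set.diff_subset⟩
      · intro h; exact (S2D (h ▸ mm1)).2 hv₁.2.1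
      · intro h; exact (S3B (h ▸ mm1)).2 hv₁.1.1
      · intro h; exact (S4B (h ▸ mm1)).2 hv₁.1.1
      · intro h; exact (S3B (h ▸ mm2)).2 hv₂.1.1
      · intro h; exact (S4B (h ▸ mm2)).2 hv₂.1.1
      · intro h; exact (S4D (h ▸ mm3)).2 hv₃.2.1
    · left
      have hS : ({a, b} : Set V) ≠ {c, d} := by rw [← hab, ← hcd]; exact hE
      constructor
      · by_contra hn
        exact hcross (notsep_nested hG hsAB hsCD hab hab' hcd hS hn)
      · by_contra hn
        apply hcross
        have h2 := notsep_nested hG hsCD hsAB hcd hcd' hab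
          (fun h => hS h.symm) hn
        unfold Nested at h2 ⊢
        tauto
  · rintro (⟨hsep1, _⟩ | ⟨hE, H₁, H₂, H₃, H₄, _, _, _, _, _, _,
      S1A, S2A, S3B, S4B, S1C, S2D, S3C, S4D⟩)
    · intro hnest
      have hcC : c ∈ C ∩ D := by rw [hcd]; exact Set.mem_insert _ _
      have hdC : d ∈ C ∩ D := by rw [hcd]; exact Set.mem_insert_iff.mpr (Or.inr rfl)
      unfold SepSeparates at hsep1
      unfold Nested at hnest
      rcases hsep1 with ⟨hX, hY⟩ | ⟨hY, hX⟩
      · rcases hnest with ⟨g1, g2⟩ | ⟨g1, g2⟩ | ⟨g1, g2⟩ | ⟨g1, g2⟩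
        · exact hX.2 (g2 hcC.2)
        · exact hX.2 (g2 hcC.1)
        · exact hY.2 (g2 hdC.2)
        · exact hY.2 (g2 hdC.1)
      · rcases hnest with ⟨g1, g2⟩ | ⟨g1, g2⟩ | ⟨g1, g2⟩ | ⟨g1, g2⟩
        · exact hX.2 (g2 hdC.2)
        · exact hX.2 (g2 hdC.1)
        · exact hY.2 (g2 hcC.2)
        · exact hY.2 (g2 hcC.1)
    · intro hnest
      unfold Nested at hnest
      rcases hnest with ⟨g1, g2⟩ | ⟨g1, g2⟩ | ⟨g1, g2⟩ | ⟨g1, g2⟩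
      · obtain ⟨z, hz⟩ := H₂.exists_rep
        have him : ↑z ∈ Subtype.val '' H₂.supp :=
          ⟨z, (SimpleGraph.ConnectedComponent.mem_supp_iff _ _).mpr hz, rfl⟩
        exact z.2 (hE.ge ⟨g1 (S2A him), S2D him⟩)
      · obtain ⟨z, hz⟩ := H₁.exists_rep
        have him : ↑z ∈ Subtype.val '' H₁.supp :=
          ⟨z, (SimpleGraph.ConnectedComponent.mem_supp_iff _ _).mpr hz, rfl⟩
        exact z.2 (hE.ge ⟨S1C him, g1 (S1A him)⟩)
      · obtain ⟨z, hz⟩ := H₄.exists_rep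
        have him : ↑z ∈ Subtype.val '' H₄.supp :=
          ⟨z, (SimpleGraph.ConnectedComponent.mem_supp_iff _ _).mpr hz, rfl⟩
        exact z.2 (hE.ge ⟨g1 (S4B him), S4D him⟩)
      · obtain ⟨z, hz⟩ := H₃.exists_rep
        have him : ↑z ∈ Subtype.val '' H₃.supp :=
          ⟨z, (SimpleGraph.ConnectedComponent.mem_supp_iff _ _).mpr hz, rfl⟩
        exact z.2 (hE.ge ⟨S3C him, g1 (S3B him)⟩)
end

section
/- Let G be a 2-connected graph with normal spanning tree T rooted at r and compatible numbering. Let a, b be vertices with a a proper ancestor of b, and suppose: some child a' of a has b as a proper leftmost descendant; a ≠ r; T[a, b] is stable; and every child c of b satisfies lwpt(c) ≥ a or hgpt(c) ≤ a. Let D be the set of children d of b with lwpt(d) = a and lwpt₂(d) = b. Then the connected components of G − {a, b} are exactly: the component containing r, the component containing a', and G[Desc(d)] for each d ∈ D, and these are pairwise distinct. -/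
open SimpleGraph

variable {V : Type*}

set_option linter.unusedSectionVars false
set_option maxHeartbeats 1000000

namespace T2Aux

open SimpleGraph Walk

variable [DecidableEq V] {G T : SimpleGraph V} {r : V}

noncomputable def pth (hT : T.IsTree) (r v : V) : T.Walk r v :=
  (hT.existsUnique_path r v).choose

lemma pth_isPath (hT : T.IsTree) (r v : V) : (pth hT r v).IsPath :=
  (hT.existsUnique_path r v).choose_spec.1

lemma pth_eq (hT : T.IsTree) {v : V} (p : T.Walk r v) (hp : p.IsPath) : p = pth hT r v :=
  (hT.existsUnique_path r v).choose_spec.2 p hp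

lemma anc_iff (hT : T.IsTree) {u v : V} : Anc T r u v ↔ u ∈ (pth hT r v).support := by
  constructor
  · exact fun h => h _ (pth_isPath hT r v)
  · intro h p hp; rwa [pth_eq hT p hp]

lemma anc_of_mem (hT : T.IsTree) {u v : V} {p : T.Walk r v} (hp : p.IsPath)
    (h : u ∈ p.support) : Anc T r u v := by
  intro q hq
  rwa [pth_eq hT q hq, ← pth_eq hT p hp]

lemma anc_refl (T : SimpleGraph V) (r v : V) : Anc T r v v :=
  fun p _ => p.end_mem_support

lemma anc_root (T : SimpleGraph V) (r v : V) : Anc T r r v :=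
  fun p _ => p.start_mem_support

lemma anc_r {u : V} (h : Anc T r u r) : u = r := by
  have := h Walk.nil IsPath.nil
  simpa [Walk.support_nil] using this

lemma anc_trans {u v w : V} (huv : Anc T r u v) (hvw : Anc T r v w) : Anc T r u w :=
  fun p hp => p.support_takeUntil_subset (hvw p hp) (huv _ (hp.takeUntil (hvw p hp)))

lemma anc_antisymm (hT : T.IsTree) {u v : V} (huv : Anc T r u v) (hvu : Anc T r v u) :
    u = v := by
  have hpp := pth_isPath hT r v
  have hu : u ∈ (pth hT r v).support := (anc_iff hT).1 huv
  have hq : ((pth hT r v).takeUntil u hu).IsPath := hpp.takeUntil hu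
  have hv : v ∈ ((pth hT r v).takeUntil u hu).support := hvu _ hq
  have hd : v ∈ ((pth hT r v).dropUntil u hu).support := Walk.end_mem_support _
  rw [(pth hT r v).dropUntil u hu |>.support_eq_cons] at hd
  rcases List.eq_or_mem_of_mem_cons hd with h | h
  · exact h.symm
  · exfalso
    have hnd : (pth hT r v).support.Nodup := hpp.support_nodup
    rw [← (pth hT r v).take_spec hu, Walk.support_append] at hnd
    exact (List.disjoint_of_nodup_append hnd) hv h

lemma anc_total (hT : T.IsTree) {u w v : V} (hu : Anc T r u v) (hw : Anc T r w v) :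
    Anc T r u w ∨ Anc T r w u := by
  have hpp := pth_isPath hT r v
  have hwv : w ∈ (pth hT r v).support := (anc_iff hT).1 hw
  have huv : u ∈ (pth hT r v).support := (anc_iff hT).1 hu
  rw [← (pth hT r v).take_spec hwv, Walk.mem_support_append_iff] at huv
  rcases huv with h | h
  · exact Or.inl (anc_of_mem hT (hpp.takeUntil hwv) h)
  · right
    set q := (pth hT r v).dropUntil w hwv with hqdef
    have hqp : q.IsPath := hpp.dropUntil hwv
    have hu2 : u ∈ q.support := h
    have hq2 : (q.takeUntil u hu2).IsPath := hqp.takeUntil hu2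
    have happ : (((pth hT r v).takeUntil w hwv).append (q.takeUntil u hu2)).IsPath := by
      rw [Walk.isPath_def, Walk.support_append]
      refine List.Nodup.append (hpp.takeUntil hwv).support_nodup hq2.support_nodup.tail ?_
      intro x hx1 hx2
      have hnd : (pth hT r v).support.Nodup := hpp.support_nodup
      rw [← (pth hT r v).take_spec hwv, Walk.support_append] at hnd
      have hxq : x ∈ (q.takeUntil u hu2).support := List.mem_of_mem_tail hx2
      have hxq' : x ∈ q.support := q.support_takeUntil_subset hu2 hxq
      have hxw : x ≠ w := by
        intro hxw; subst hxw
        have := hq2.support_nodup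
        rw [(q.takeUntil u hu2).support_eq_cons] at this
        exact (List.nodup_cons.mp this).1 hx2
      rw [q.support_eq_cons] at hxq'
      rcases List.eq_or_mem_of_mem_cons hxq' with h' | h'
      · exact hxw h'
      · exact (List.disjoint_of_nodup_append hnd) hx1 h'
    refine anc_of_mem hT happ ?_
    rw [Walk.mem_support_append_iff]
    exact Or.inl (Walk.end_mem_support _)

lemma anc_of_mem_dropUntil (hT : T.IsTree) {t x m : V}
    (ht : t ∈ (pth hT r x).support) (hm : m ∈ ((pth hT r x).dropUntil t ht).support) :
    Anc T r t m := by
  have hpp := pth_isPath hT r x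
  have hmx : Anc T r m x :=
    anc_of_mem hT hpp ((pth hT r x).support_dropUntil_subset ht hm)
  have htx : Anc T r t x := anc_of_mem hT hpp ht
  rcases anc_total hT htx hmx with h | h
  · exact h
  · -- m is an ancestor of t; show m = t
    by_cases hmt : m = t
    · subst hmt; exact anc_refl T r m
    · exfalso
      have hmts : m ∈ ((pth hT r x).takeUntil t ht).support := h _ (hpp.takeUntil ht)
      have hnd : (pth hT r x).support.Nodup := hpp.support_nodup
      rw [← (pth hT r x).take_spec ht, Walk.support_append] at hnd
      have : m ∈ ((pth hT r x).dropUntil t ht).support.tail := by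
        rw [((pth hT r x).dropUntil t ht).support_eq_cons] at hm
        rcases List.eq_or_mem_of_mem_cons hm with h' | h'
        · exact absurd h' hmt
        · exact h'
      exact (List.disjoint_of_nodup_append hnd) hmts this

lemma pth_child (hT : T.IsTree) {p c : V} (h : IsChild T r p c) :
    (pth hT r c).support = (pth hT r p).support ++ [c] := by
  have hcp : c ∉ (pth hT r p).support := by
    intro hc
    have : Anc T r c p := anc_of_mem hT (pth_isPath hT r p) hc
    exact h.1.ne (anc_antisymm hT h.2 this)
  have hpath : ((pth hT r p).concat h.1).IsPath := by
    rw [Walk.isPath_def, Walk.support_concat]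
    exact List.Nodup.append (pth_isPath hT r p).support_nodup (List.nodup_singleton c)
      (by simpa using hcp)
  rw [← pth_eq hT _ hpath, Walk.support_concat]

lemma anc_child_iff (hT : T.IsTree) {p c u : V} (h : IsChild T r p c) :
    Anc T r u c ↔ Anc T r u p ∨ u = c := by
  rw [anc_iff hT, pth_child hT h, List.mem_append, List.mem_singleton, ← anc_iff hT]

lemma sibling_eq (hT : T.IsTree) {v c w x : V} (hc : IsChild T r v c) (hw : IsChild T r v w)
    (hxc : Anc T r c x) (hxw : Anc T r w x) : c = w := by
  rcases anc_total hT hxc hxw with h | h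
  · rcases (anc_child_iff hT hw).1 h with h' | h'
    · exact absurd (anc_antisymm hT hc.2 h').symm hc.1.ne'
    · exact h'
  · rcases (anc_child_iff hT hc).1 h with h' | h'
    · exact absurd (anc_antisymm hT hw.2 h').symm hw.1.ne'
    · exact h'.symm

lemma exists_child (hT : T.IsTree) {u v : V} (huv : Anc T r u v) (hne : u ≠ v) :
    ∃ c, IsChild T r u c ∧ Anc T r c v := by
  have hu : u ∈ (pth hT r v).support := (anc_iff hT).1 huv
  have hq : ((pth hT r v).dropUntil u hu).IsPath := (pth_isPath hT r v).dropUntil hu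
  have hsub : ∀ x ∈ ((pth hT r v).dropUntil u hu).support, x ∈ (pth hT r v).support :=
    fun x hx => (pth hT r v).support_dropUntil_subset hu hx
  have hanc : ∀ x ∈ ((pth hT r v).dropUntil u hu).support, Anc T r u x :=
    fun x hx => anc_of_mem_dropUntil hT hu hx
  generalize ((pth hT r v).dropUntil u hu) = q at hq hsub hanc
  cases q with
  | nil => exact absurd rfl hne
  | @cons _ c _ h q' =>
      refine ⟨c, ⟨h, hanc c (by simp [Walk.support_cons])⟩,
        anc_of_mem hT (pth_isPath hT r v) (hsub c (by simp [Walk.support_cons]))⟩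

lemma parent_unique (hT : T.IsTree) {p₁ p₂ c : V} (h₁ : IsChild T r p₁ c)
    (h₂ : IsChild T r p₂ c) : p₁ = p₂ := by
  have hm : p₂ ∈ (pth hT r c).support := (anc_iff hT).1 h₂.2
  rw [pth_child hT h₁, List.mem_append, List.mem_singleton] at hm
  rcases hm with h | h
  · have h21 : Anc T r p₂ p₁ := anc_of_mem hT (pth_isPath hT r p₁) h
    have hm1 : p₁ ∈ (pth hT r c).support := (anc_iff hT).1 h₁.2
    rw [pth_child hT h₂, List.mem_append, List.mem_singleton] at hm1
    rcases hm1 with h' | h'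
    · exact anc_antisymm hT (anc_of_mem hT (pth_isPath hT r p₂) h') h21
    · exact absurd h' h₁.1.ne
  · exact absurd h h₂.1.ne

section Layer2

variable [Fintype V] {num : V → ℕ} {lwpt1 lwpt2 : V → V}

lemma anc_num_le (hnum : CompatibleNumbering G T r num lwpt1 lwpt2) {u v : V}
    (h : Anc T r u v) : num u ≤ num v := by
  have : num v ∈ num '' Desc T r u := ⟨v, h, rfl⟩
  rw [hnum.2.1 u, Set.mem_Icc] at this
  exact this.1

lemma anc_num_ub (hnum : CompatibleNumbering G T r num lwpt1 lwpt2) {u v : V}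
    (h : Anc T r u v) : num v ≤ num u + (Desc T r u).ncard - 1 := by
  have : num v ∈ num '' Desc T r u := ⟨v, h, rfl⟩
  rw [hnum.2.1 u, Set.mem_Icc] at this
  exact this.2

lemma panc_num_lt (hnum : CompatibleNumbering G T r num lwpt1 lwpt2) {u v : V}
    (h : PAnc T r u v) : num u < num v :=
  lt_of_le_of_ne (anc_num_le hnum h.1) (fun he => h.2 (hnum.1.1 he))

lemma mem_desc_of_num (hnum : CompatibleNumbering G T r num lwpt1 lwpt2) {u x : V}
    (h1 : num u ≤ num x) (h2 : num x ≤ num u + (Desc T r u).ncard - 1) : Anc T r u x := by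
  have : num x ∈ num '' Desc T r u := by rw [hnum.2.1 u]; exact Set.mem_Icc.mpr ⟨h1, h2⟩
  obtain ⟨w, hw, hwx⟩ := this
  exact (hnum.1.1 hwx) ▸ hw

lemma desc_lt (hT : T.IsTree) (hnum : CompatibleNumbering G T r num lwpt1 lwpt2)
    {v c w x : V} (hc : IsChild T r v c) (hw : IsChild T r v w) (hlt : num c < num w)
    (hx : Anc T r c x) : num x < num w := by
  by_contra h
  push_neg at h
  have h2 : num x ≤ num c + (Desc T r c).ncard - 1 := anc_num_ub hnum hx
  have hcw : Anc T r c w := mem_desc_of_num hnum hlt.le (h.trans h2)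
  rcases (anc_child_iff hT hw).1 hcw with h' | h'
  · exact absurd (anc_antisymm hT hc.2 h').symm hc.1.ne'
  · exact hlt.ne (congrArg num h')

lemma leftmost_anc {a' b : V} (h : LeftmostDesc T r num a' b) : Anc T r a' b := by
  induction h with
  | refl => exact anc_refl T r a'
  | @tail b' c' hab hstep ih => exact anc_trans ih hstep.1.2


lemma leftmost_num_lt (hT : T.IsTree) (hnum : CompatibleNumbering G T r num lwpt1 lwpt2)
    {a' b : V} (h : LeftmostDesc T r num a' b) {x : V} :
    Anc T r a' x → ¬ Anc T r b x → num x < num b := by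
  induction h using Relation.ReflTransGen.head_induction_on with
  | refl => exact fun h1 h2 => absurd h1 h2
  | @head a₀ c hstep hrest ih =>
      intro h1 h2
      by_cases hc : Anc T r c x
      · exact ih hc h2
      · have hb : Anc T r c b := leftmost_anc hrest
        by_cases hax : a₀ = x
        · subst hax
          exact (panc_num_lt hnum ⟨hstep.1.2, hstep.1.1.ne⟩).trans_le (anc_num_le hnum hb)
        · obtain ⟨c', hc', hcx⟩ := exists_child hT h1 hax
          have hne : c' ≠ c := fun h => hc (h ▸ hcx)
          have hlt : num c' < num c :=
            lt_of_le_of_ne (hstep.2 c' hc') (fun h => hne (hnum.1.1 h))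
          exact (desc_lt hT hnum hc' hstep.1 hlt hcx).trans_le (anc_num_le hnum hb)

lemma lwpt1_min (hT : T.IsTree) {v l : V} (h1 : IsKthLowpoint G T r 1 v l)
    (hne : (Lset G T r v).Nonempty) :
    l ∈ Lset G T r v ∧ ∀ u ∈ Lset G T r v, Anc T r l u := by
  rcases h1 with ⟨hl, hcard⟩ | ⟨hcard, _⟩
  · refine ⟨hl, fun u hu => ?_⟩
    have hS : {u ∈ Lset G T r v | PAnc T r u l} = ∅ := by
      rw [← Set.ncard_eq_zero (Set.toFinite _)]
      simpa using hcard
    rcases anc_total hT hu.1.1 hl.1.1 with h | h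
    · by_cases hul : u = l
      · exact hul ▸ anc_refl T r u
      · exact absurd (Set.mem_setOf_eq ▸ ⟨hu, h, hul⟩ : u ∈ {u ∈ Lset G T r v | PAnc T r u l})
          (by rw [hS]; exact Set.notMem_empty u)
    · exact h
  · exfalso
    have : Lset G T r v = ∅ := by
      rw [← Set.ncard_eq_zero (Set.toFinite _)]
      omega
    exact Set.not_nonempty_empty (this ▸ hne)

lemma lwpt2_second (hT : T.IsTree) {v l m x y : V} (h1 : IsKthLowpoint G T r 1 v l)
    (h2 : IsKthLowpoint G T r 2 v m) (hx : x ∈ Lset G T r v) (hy : y ∈ Lset G T r v)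
    (hxy : x ≠ y) :
    m ∈ Lset G T r v ∧ m ≠ l ∧ ∀ u ∈ Lset G T r v, u ≠ l → Anc T r m u := by
  have hne : (Lset G T r v).Nonempty := ⟨x, hx⟩
  have hmin := lwpt1_min hT h1 hne
  have hgt1 : 1 < (Lset G T r v).ncard :=
    (Set.one_lt_ncard_iff (Set.toFinite _)).2 ⟨x, y, hx, hy, hxy⟩
  rcases h2 with ⟨hm, hcard⟩ | ⟨hcard, _⟩
  · have hcard' : {u ∈ Lset G T r v | PAnc T r u m}.ncard = 1 := by simpa using hcard
    have hml : m ≠ l := by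
      intro he
      subst he
      have : {u ∈ Lset G T r v | PAnc T r u m} = ∅ := by
        ext u
        simp only [Set.mem_setOf_eq, Set.mem_empty_iff_false, iff_false, not_and]
        intro hu hpu
        exact hpu.2 (anc_antisymm hT hpu.1 (hmin.2 u hu))
      rw [this] at hcard'
      simp at hcard'
    have hSl : {u ∈ Lset G T r v | PAnc T r u m} = {l} := by
      obtain ⟨x0, hx0⟩ := Set.ncard_eq_one.mp hcard'
      have hlS : l ∈ {u ∈ Lset G T r v | PAnc T r u m} :=
        ⟨hmin.1, hmin.2 m hm, hml.symm⟩
      rw [hx0] at hlS ⊢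
      rw [Set.mem_singleton_iff.mp hlS]
    refine ⟨hm, hml, fun u hu hul => ?_⟩
    rcases anc_total hT hu.1.1 hm.1.1 with h | h
    · by_cases hum : u = m
      · exact hum ▸ anc_refl T r u
      · have : u ∈ {u ∈ Lset G T r v | PAnc T r u m} := ⟨hu, h, hum⟩
        rw [hSl, Set.mem_singleton_iff] at this
        exact absurd this hul
    · exact h
  · omega

end Layer2

section Reach

lemma reach_walk (hle : T ≤ G) {s : Set V} {t x : V} (q : T.Walk t x)
    (hq : ∀ m ∈ q.support, m ∈ s) :
    (G.induce s).Reachable ⟨t, hq t q.start_mem_support⟩ ⟨x, hq x q.end_mem_support⟩ := by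
  induction q with
  | nil => exact Reachable.refl _
  | @cons t c x h p ih =>
      have h1 : t ∈ s := hq t (by simp [Walk.support_cons])
      have h2 : c ∈ s := hq c (by simp [Walk.support_cons])
      have hadj : (G.induce s).Adj ⟨t, h1⟩ ⟨c, h2⟩ := by
        simp only [comap_adj, Function.Embedding.coe_subtype]
        exact hle h
      exact (hadj.reachable).trans (ih (fun m hm => hq m (by simp [Walk.support_cons, hm])))

lemma reach_anc (hT : T.IsTree) (hle : T ≤ G) {s : Set V} {t x : V} (htx : Anc T r t x)
    (hall : ∀ m, Anc T r t m → Anc T r m x → m ∈ s) :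
    (G.induce s).Reachable ⟨t, hall t (anc_refl T r t) htx⟩
      ⟨x, hall x htx (anc_refl T r x)⟩ := by
  have ht : t ∈ (pth hT r x).support := (anc_iff hT).1 htx
  have hq : ∀ m ∈ ((pth hT r x).dropUntil t ht).support, m ∈ s := fun m hm =>
    hall m (anc_of_mem_dropUntil hT ht hm)
      (anc_of_mem hT (pth_isPath hT r x) ((pth hT r x).support_dropUntil_subset ht hm))
  exact reach_walk hle _ hq

lemma exists_crossing {α : Type*} {H : SimpleGraph α} {K : Set α} :
    ∀ {u v : α}, H.Walk u v → u ∈ K → v ∉ K → ∃ x y, H.Adj x y ∧ x ∈ K ∧ y ∉ K := by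
  intro u v p
  induction p with
  | nil => exact fun h1 h2 => absurd h1 h2
  | @cons a c b h p ih =>
      intro h1 h2
      by_cases hc : c ∈ K
      · exact ih hc h2
      · exact ⟨a, c, h, h1, hc⟩

lemma walk_closed {α : Type*} {H : SimpleGraph α} {K : Set α}
    (hcl : ∀ x y, H.Adj x y → x ∈ K → y ∈ K) :
    ∀ {u v : α}, H.Walk u v → u ∈ K → v ∈ K := by
  intro u v p
  induction p with
  | nil => exact id
  | cons h p ih => exact fun h1 => ih (hcl _ _ h h1)

end Reach

end T2Aux

/-- Connected components of `G - {a,b}` in the type-2 situation: they are exactly the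
component containing the root `r`, the component containing `a'`, and `G[Desc d]` for
each child `d` of `b` with `lwpt d = a` and `lwpt₂ d = b`; and these are pairwise
distinct. -/
theorem components_type2 [Fintype V] (G T : SimpleGraph V) (r : V)
    (num : V → ℕ) (lwpt1 lwpt2 hgpt : V → V)
    (hG : TwoConnected G) (hT : IsNormalSpanningTree G T r)
    (hnum : CompatibleNumbering G T r num lwpt1 lwpt2)
    (hhg : ∀ v, IsHighpoint G T r v (hgpt v))
    (a b a' : V)
    (hchild : IsChild T r a a')
    (hlm : LeftmostDesc T r num a' b) (hne : a' ≠ b)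
    (har : a ≠ r)
    (hstab : Stable G T r num a b)
    (hch : ∀ c, IsChild T r b c → num a ≤ num (lwpt1 c) ∨ num (hgpt c) ≤ num a)
    (Dset : Set V)
    (hD : Dset = {d | IsChild T r b d ∧ lwpt1 d = a ∧ lwpt2 d = b}) :
    (∀ Cc : (G.induce {w | w ≠ a ∧ w ≠ b}).ConnectedComponent,
      r ∈ Subtype.val '' Cc.supp ∨ a' ∈ Subtype.val '' Cc.supp ∨
        ∃ d ∈ Dset, Subtype.val '' Cc.supp = Desc T r d) ∧
    (∀ d ∈ Dset, ∃ Cc : (G.induce {w | w ≠ a ∧ w ≠ b}).ConnectedComponent,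
      Subtype.val '' Cc.supp = Desc T r d) ∧
    (¬ ∃ Cc : (G.induce {w | w ≠ a ∧ w ≠ b}).ConnectedComponent,
      r ∈ Subtype.val '' Cc.supp ∧ a' ∈ Subtype.val '' Cc.supp) ∧
    (∀ d ∈ Dset, r ∉ Desc T r d ∧ a' ∉ Desc T r d) := by
  classical
  obtain ⟨htree, hle, hcmp⟩ := hT
  set S : Set V := {w | w ≠ a ∧ w ≠ b} with hSdef
  have hadj_or : ∀ {u v : V}, G.Adj u v → Anc T r u v ∨ Anc T r v u := fun h => hcmp _ _ h
  have haa' : Anc T r a a' := hchild.2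
  have ha'b : Anc T r a' b := T2Aux.leftmost_anc hlm
  have hab : Anc T r a b := T2Aux.anc_trans haa' ha'b
  have hnaa' : a ≠ a' := hchild.1.ne
  have hnab : a ≠ b := fun h => hnaa' (T2Aux.anc_antisymm htree haa' (h ▸ ha'b))
  have ha'r : a' ≠ r := fun h => har (T2Aux.anc_r (h ▸ haa'))
  have hbr : b ≠ r := fun h => ha'r (T2Aux.anc_r (h ▸ ha'b))
  have hrS : r ∈ S := ⟨Ne.symm har, Ne.symm hbr⟩
  have ha'S : a' ∈ S := ⟨hchild.1.ne', hne⟩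
  -- normalize stability to a'
  obtain ⟨a'', hch'', hlm'', hstab''⟩ := hstab
  have ha''eq : a'' = a' := T2Aux.sibling_eq htree hch'' hchild (T2Aux.leftmost_anc hlm'') ha'b
  rw [ha''eq] at hstab''
  have hnumaa' : num a < num a' := T2Aux.panc_num_lt hnum ⟨haa', hnaa'⟩
  have hnuma'b : num a' ≤ num b := T2Aux.anc_num_le hnum ha'b
  -- L-set membership helper
  have hLmem : ∀ {c z y : V}, Anc T r c z → G.Adj y z → Anc T r y z → ¬ Anc T r c y →
      y ∈ Lset G T r c := by
    intro c z y hcz hadj hyz hncy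
    rcases T2Aux.anc_total htree hyz hcz with h | h
    · exact ⟨⟨h, fun he => hncy (by rw [← he]; exact T2Aux.anc_refl T r y)⟩, z, hcz, hadj⟩
    · exact absurd h hncy
  -- descendants of children of b avoid a and b
  have hSdesc : ∀ {c : V}, IsChild T r b c → ∀ m, Anc T r c m → m ∈ S := by
    intro c hc m hm
    constructor
    · intro h
      have hac : Anc T r a c := T2Aux.anc_trans hab hc.2
      have h2 : a = c := T2Aux.anc_antisymm htree hac (h ▸ hm)
      exact hnab (T2Aux.anc_antisymm htree hab (h2 ▸ hc.2))
    · intro h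
      exact hc.1.ne (T2Aux.anc_antisymm htree hc.2 (h ▸ hm))
  have hbLset : ∀ {c : V}, IsChild T r b c → b ∈ Lset G T r c := fun hc =>
    ⟨⟨hc.2, hc.1.ne⟩, _, T2Aux.anc_refl T r _, hle hc.1⟩
  -- full description of Lset for d ∈ D
  have hDLset : ∀ {d : V}, IsChild T r b d → lwpt1 d = a → lwpt2 d = b →
      ∀ u ∈ Lset G T r d, u = a ∨ u = b := by
    intro d hdb hd1 hd2 u hu
    have hmin := T2Aux.lwpt1_min htree (hnum.2.2.1 d) ⟨b, hbLset hdb⟩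
    rw [hd1] at hmin
    have h2 := T2Aux.lwpt2_second htree (hnum.2.2.1 d) (hnum.2.2.2.1 d) hmin.1 (hbLset hdb) hnab
    rw [hd2, hd1] at h2
    by_cases hua : u = a
    · exact Or.inl hua
    · have hbu : Anc T r b u := h2.2.2 u hu hua
      rcases (T2Aux.anc_child_iff htree hdb).1 hu.1.1 with h | h
      · exact Or.inr (T2Aux.anc_antisymm htree h hbu)
      · exact absurd h hu.1.2
  -- closure & supp for d ∈ D
  have HDclosed : ∀ {d : V}, IsChild T r b d → lwpt1 d = a → lwpt2 d = b →
      ∀ (z y : ↥S), (G.induce S).Adj z y → (z : V) ∈ Desc T r d → (y : V) ∈ Desc T r d := by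
    intro d hdb hd1 hd2 z y hzy hz
    have hg : G.Adj (z : V) (y : V) := by simpa using hzy
    rcases hadj_or hg with h | h
    · exact T2Aux.anc_trans hz h
    · by_cases hdy : Anc T r d (y : V)
      · exact hdy
      · have hyL : (y : V) ∈ Lset G T r d := hLmem hz hg.symm h hdy
        rcases hDLset hdb hd1 hd2 _ hyL with h' | h'
        · exact absurd h' y.2.1
        · exact absurd h' y.2.2
  have HDsupp : ∀ {d : V}, IsChild T r b d → lwpt1 d = a → lwpt2 d = b →
      ∀ (hdS : d ∈ S),
      (Subtype.val ''
        ((G.induce S).connectedComponentMk ⟨d, hdS⟩).supp = Desc T r d) ∧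
      (∀ x (hx : Anc T r d x) (hxS : x ∈ S),
        (G.induce S).connectedComponentMk ⟨x, hxS⟩ =
          (G.induce S).connectedComponentMk ⟨d, hdS⟩) := by
    intro d hdb hd1 hd2 hdS
    have hreach : ∀ x (hx : Anc T r d x) (hxS : x ∈ S),
        (G.induce S).Reachable ⟨x, hxS⟩ ⟨d, hdS⟩ :=
      fun x hx hxS => (T2Aux.reach_anc htree hle hx (fun m h1 _ => hSdesc hdb m h1)).symm
    refine ⟨?_, fun x hx hxS => SimpleGraph.ConnectedComponent.sound (hreach x hx hxS)⟩
    ext u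
    constructor
    · rintro ⟨z, hz, rfl⟩
      have hzd : (G.induce S).Reachable ⟨d, hdS⟩ z :=
        (SimpleGraph.ConnectedComponent.exact hz).symm
      obtain ⟨p⟩ := hzd
      exact T2Aux.walk_closed (K := {w : ↥S | (w : V) ∈ Desc T r d})
        (fun x y hxy hx => HDclosed hdb hd1 hd2 x y hxy hx) p (T2Aux.anc_refl T r d)
    · intro hu
      have huS : u ∈ S := hSdesc hdb u hu
      exact ⟨⟨u, huS⟩, SimpleGraph.ConnectedComponent.sound (hreach u hu huS), rfl⟩
  -- reach a' from Desc a' \ Desc b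
  have hSofA : ∀ x, Anc T r a' x → ¬ Anc T r b x → x ∈ S := by
    intro x h1 h2
    constructor
    · intro h
      exact hnaa' (T2Aux.anc_antisymm htree haa' (h ▸ h1))
    · intro h
      exact h2 (h ▸ T2Aux.anc_refl T r b)
  have HreachA : ∀ x (hx1 : Anc T r a' x) (hx2 : ¬ Anc T r b x),
      (G.induce S).Reachable ⟨a', ha'S⟩ ⟨x, hSofA x hx1 hx2⟩ := by
    intro x hx1 hx2
    exact T2Aux.reach_anc htree hle hx1
      (fun m h1 h2 => hSofA m h1 (fun hb => hx2 (T2Aux.anc_trans hb h2)))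
    -- reach r from outside Desc a'
  have HreachR1 : ∀ x (hxa' : ¬ Anc T r a' x) (hxS : x ∈ S),
      (G.induce S).Reachable ⟨x, hxS⟩ ⟨r, hrS⟩ := by
    intro x hxa' hxS
    by_cases hax : Anc T r a x
    · obtain ⟨c', hc', hc'x⟩ := T2Aux.exists_child htree hax (fun h => hxS.1 h.symm)
      have hc'a' : c' ≠ a' := fun h => hxa' (h ▸ hc'x)
      have hnotac' : ∀ m, Anc T r c' m → m ∈ S := by
        intro m hm
        constructor
        · intro h
          exact hc'.1.ne (T2Aux.anc_antisymm htree hc'.2 (h ▸ hm))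
        · intro h
          exact hc'a' (T2Aux.sibling_eq htree hc' hchild (h ▸ hm) ha'b)
      have hc'2 : c' ∈ {u : V | u ≠ a} := hc'.1.ne'
      have hr2 : r ∈ {u : V | u ≠ a} := Ne.symm har
      obtain ⟨p⟩ := (hG.2 a).preconnected ⟨c', hc'2⟩ ⟨r, hr2⟩
      have hrK : (⟨r, hr2⟩ : {u : V // u ≠ a}) ∉ {z : {u : V // u ≠ a} | (z : V) ∈ Desc T r c'} := by
        intro h
        have h1 : c' = r := T2Aux.anc_r h
        exact har (T2Aux.anc_r (h1 ▸ hc'.2))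
      obtain ⟨z, y, hzy, hzK, hyK⟩ :=
        T2Aux.exists_crossing p (T2Aux.anc_refl T r c') hrK
      have hgzy : G.Adj (z : V) (y : V) := by simpa using hzy
      have hanczy : Anc T r (y : V) (z : V) := by
        rcases hadj_or hgzy with h | h
        · exact absurd (T2Aux.anc_trans hzK h) hyK
        · exact h
      have hyc' : PAnc T r (y : V) c' := by
        rcases T2Aux.anc_total htree hanczy hzK with h | h
        · exact ⟨h, fun he => hyK (by rw [← he]; exact T2Aux.anc_refl T r _)⟩
        · exact absurd (show (y : V) ∈ Desc T r c' from h) hyK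
      have hya : PAnc T r (y : V) a := by
        rcases (T2Aux.anc_child_iff htree hc').1 hyc'.1 with h | h
        · exact ⟨h, y.2⟩
        · exact absurd h hyc'.2
      have hzS : (z : V) ∈ S := hnotac' _ hzK
      have hyS : (y : V) ∈ S :=
        ⟨y.2, fun h => hnab (T2Aux.anc_antisymm htree hab (h ▸ hya.1))⟩
      have hxS' : x ∈ S := hxS
      have R1 : (G.induce S).Reachable ⟨c', hnotac' c' (T2Aux.anc_refl T r c')⟩ ⟨x, hxS⟩ :=
        T2Aux.reach_anc htree hle hc'x (fun m h1 _ => hnotac' m h1)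
      have R2 : (G.induce S).Reachable ⟨c', hnotac' c' (T2Aux.anc_refl T r c')⟩ ⟨(z : V), hzS⟩ :=
        T2Aux.reach_anc htree hle hzK (fun m h1 _ => hnotac' m h1)
      have R3 : (G.induce S).Adj ⟨(z : V), hzS⟩ ⟨(y : V), hyS⟩ := by
        simpa using hgzy
      have hallr : ∀ m, Anc T r r m → Anc T r m (y : V) → m ∈ S := by
        intro m _ h2
        constructor
        · intro h
          exact hya.2 (T2Aux.anc_antisymm htree hya.1 (h ▸ h2))
        · intro h
          exact hnab (T2Aux.anc_antisymm htree hab (T2Aux.anc_trans (h ▸ h2) hya.1))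
      have R4 : (G.induce S).Reachable ⟨r, hrS⟩ ⟨(y : V), hyS⟩ :=
        T2Aux.reach_anc htree hle (T2Aux.anc_root T r (y : V)) hallr
      exact (R1.symm.trans (R2.trans (R3.reachable.trans R4.symm)))
    · have hallr : ∀ m, Anc T r r m → Anc T r m x → m ∈ S := by
        intro m _ h2
        constructor
        · intro h
          exact hax (h ▸ h2)
        · intro h
          exact hxa' (T2Aux.anc_trans ha'b (h ▸ h2))
      exact (T2Aux.reach_anc htree hle (T2Aux.anc_root T r x) hallr).symm
  -- reach r from an r-type subtree below b
  have HreachR2 : ∀ c (hcb : IsChild T r b c) (hcR : PAnc T r (lwpt1 c) a),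
      ∀ x (hx : Anc T r c x),
      (G.induce S).Reachable ⟨x, hSdesc hcb x hx⟩ ⟨r, hrS⟩ := by
    intro c hcb hcR x hx
    obtain ⟨hlL, hlmin⟩ := T2Aux.lwpt1_min htree (hnum.2.2.1 c) ⟨b, hbLset hcb⟩
    obtain ⟨⟨hlanc, hlnec⟩, w, hcw, hadjlw⟩ := hlL
    have hlS : lwpt1 c ∈ S :=
      ⟨hcR.2, fun h => hnab (T2Aux.anc_antisymm htree hab (h ▸ hcR.1))⟩
    have R1 : (G.induce S).Reachable ⟨c, hSdesc hcb c (T2Aux.anc_refl T r c)⟩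
        ⟨x, hSdesc hcb x hx⟩ :=
      T2Aux.reach_anc htree hle hx (fun m h1 _ => hSdesc hcb m h1)
    have R2 : (G.induce S).Reachable ⟨c, hSdesc hcb c (T2Aux.anc_refl T r c)⟩
        ⟨w, hSdesc hcb w hcw⟩ :=
      T2Aux.reach_anc htree hle hcw (fun m h1 _ => hSdesc hcb m h1)
    have R3 : (G.induce S).Adj ⟨w, hSdesc hcb w hcw⟩ ⟨lwpt1 c, hlS⟩ := by
      simpa using hadjlw.symm
    have hallr : ∀ m, Anc T r r m → Anc T r m (lwpt1 c) → m ∈ S := by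
      intro m _ h2
      constructor
      · intro h
        exact hcR.2 (T2Aux.anc_antisymm htree hcR.1 (h ▸ h2))
      · intro h
        exact hnab (T2Aux.anc_antisymm htree hab (T2Aux.anc_trans (h ▸ h2) hcR.1))
    have R4 : (G.induce S).Reachable ⟨r, hrS⟩ ⟨lwpt1 c, hlS⟩ :=
      T2Aux.reach_anc htree hle (T2Aux.anc_root T r (lwpt1 c)) hallr
    exact R1.symm.trans (R2.trans (R3.reachable.trans R4.symm))
    -- a'-type subtrees: find an attachment strictly between a and b
  have HAtype : ∀ c (hcb : IsChild T r b c), ¬ (lwpt1 c = a ∧ lwpt2 c = b) →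
      ¬ PAnc T r (lwpt1 c) a →
      ∃ m, PAnc T r a m ∧ PAnc T r m b ∧ ∃ w, Anc T r c w ∧ G.Adj m w := by
    intro c hcb hcD hcR
    obtain ⟨hlL, hlmin⟩ := T2Aux.lwpt1_min htree (hnum.2.2.1 c) ⟨b, hbLset hcb⟩
    have hac : Anc T r a c := T2Aux.anc_trans hab hcb.2
    have hLb : lwpt1 c ≠ b := by
      intro hlb
      have hLsub : ∀ u ∈ Lset G T r c, u = b := by
        intro u hu
        have hbu : Anc T r b u := hlb ▸ hlmin u hu
        rcases (T2Aux.anc_child_iff htree hcb).1 hu.1.1 with h | h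
        · exact T2Aux.anc_antisymm htree h hbu
        · exact absurd h hu.1.2
      have hc2 : c ∈ {u : V | u ≠ b} := hcb.1.ne'
      have hr2 : r ∈ {u : V | u ≠ b} := Ne.symm hbr
      obtain ⟨p⟩ := (hG.2 b).preconnected ⟨c, hc2⟩ ⟨r, hr2⟩
      have hrK : (⟨r, hr2⟩ : {u : V // u ≠ b}) ∉
          {z : {u : V // u ≠ b} | (z : V) ∈ Desc T r c} := by
        intro h
        have h1 : c = r := T2Aux.anc_r h
        exact hbr (T2Aux.anc_r (h1 ▸ hcb.2))
      obtain ⟨z, y, hzy, hzK, hyK⟩ :=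
        T2Aux.exists_crossing p (T2Aux.anc_refl T r c) hrK
      have hgzy : G.Adj (z : V) (y : V) := by simpa using hzy
      have hanczy : Anc T r (y : V) (z : V) := by
        rcases hadj_or hgzy with h | h
        · exact absurd (T2Aux.anc_trans hzK h) hyK
        · exact h
      have hncy : ¬ Anc T r c (y : V) := fun h =>
        hyK (show (y : V) ∈ Desc T r c from h)
      have hyL : (y : V) ∈ Lset G T r c := hLmem hzK hgzy.symm hanczy hncy
      exact y.2 (hLsub _ hyL)
    have hlanc_a : Anc T r a (lwpt1 c) := by
      rcases T2Aux.anc_total htree hlL.1.1 hac with h | h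
      · by_cases hla : lwpt1 c = a
        · exact hla ▸ T2Aux.anc_refl T r a
        · exact absurd ⟨h, hla⟩ hcR
      · exact h
    by_cases hla : lwpt1 c = a
    · have haL : a ∈ Lset G T r c := hla ▸ hlL
      have h2 := T2Aux.lwpt2_second htree (hnum.2.2.1 c) (hnum.2.2.2.1 c) haL (hbLset hcb) hnab
      have hmb : lwpt2 c ≠ b := fun h => hcD ⟨hla, h⟩
      have hma : lwpt2 c ≠ a := hla ▸ h2.2.1
      have hmbanc : Anc T r (lwpt2 c) b := by
        rcases (T2Aux.anc_child_iff htree hcb).1 h2.1.1.1 with h | h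
        · exact h
        · exact absurd h h2.1.1.2
      have hamanc : Anc T r a (lwpt2 c) := hla ▸ hlmin (lwpt2 c) h2.1
      obtain ⟨-, w, hcw, hadj⟩ := h2.1
      exact ⟨lwpt2 c, ⟨hamanc, fun h => hma h.symm⟩, ⟨hmbanc, hmb⟩, w, hcw, hadj⟩
    · have hlb2 : Anc T r (lwpt1 c) b := by
        rcases (T2Aux.anc_child_iff htree hcb).1 hlL.1.1 with h | h
        · exact h
        · exact absurd h hlL.1.2
      obtain ⟨-, w, hcw, hadj⟩ := hlL
      exact ⟨lwpt1 c, ⟨hlanc_a, fun h => hla h.symm⟩, ⟨hlb2, hLb⟩, w, hcw, hadj⟩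
  -- reach a' from an a'-type subtree
  have HreachA2 : ∀ c (hcb : IsChild T r b c), ¬ (lwpt1 c = a ∧ lwpt2 c = b) →
      ¬ PAnc T r (lwpt1 c) a → ∀ x (hx : Anc T r c x),
      (G.induce S).Reachable ⟨x, hSdesc hcb x hx⟩ ⟨a', ha'S⟩ := by
    intro c hcb hcD hcR x hx
    obtain ⟨m, ham, hmb, w, hcw, hadj⟩ := HAtype c hcb hcD hcR
    have hmS : m ∈ S :=
      ⟨fun h => ham.2 h.symm, hmb.2⟩
    have hma' : Anc T r a' m := by
      rcases T2Aux.anc_total htree hmb.1 ha'b with h | h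
      · rcases (T2Aux.anc_child_iff htree hchild).1 h with h' | h'
        · exact absurd (T2Aux.anc_antisymm htree ham.1 h') ham.2
        · rw [h']; exact T2Aux.anc_refl T r a'
      · exact h
    have hnbm : ¬ Anc T r b m := fun h =>
      hmb.2 (T2Aux.anc_antisymm htree hmb.1 h)
    have R1 : (G.induce S).Reachable ⟨c, hSdesc hcb c (T2Aux.anc_refl T r c)⟩
        ⟨x, hSdesc hcb x hx⟩ :=
      T2Aux.reach_anc htree hle hx (fun m' h1 _ => hSdesc hcb m' h1)
    have R2 : (G.induce S).Reachable ⟨c, hSdesc hcb c (T2Aux.anc_refl T r c)⟩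
        ⟨w, hSdesc hcb w hcw⟩ :=
      T2Aux.reach_anc htree hle hcw (fun m' h1 _ => hSdesc hcb m' h1)
    have R3 : (G.induce S).Adj ⟨w, hSdesc hcb w hcw⟩ ⟨m, hmS⟩ := by
      simpa using hadj.symm
    have R4 : (G.induce S).Reachable ⟨a', ha'S⟩ ⟨m, hSofA m hma' hnbm⟩ :=
      HreachA m hma' hnbm
    exact R1.symm.trans (R2.trans (R3.reachable.trans R4.symm))
    -- the a'-side predicate, closed under edges of G - {a,b}
  set P : V → Prop :=
    fun v => (Anc T r a' v ∧ ¬ Anc T r b v) ∨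
      ∃ c, IsChild T r b c ∧ ¬ PAnc T r (lwpt1 c) a ∧ Anc T r c v with hPdef
  have hPa' : P a' := Or.inl ⟨T2Aux.anc_refl T r a',
    fun h => hne (T2Aux.anc_antisymm htree ha'b h)⟩
  have hPr : ¬ P r := by
    rintro (⟨h1, -⟩ | ⟨c, hcb, -, hcr⟩)
    · exact ha'r (T2Aux.anc_r h1)
    · have : c = r := T2Aux.anc_r hcr
      exact hbr (T2Aux.anc_r (this ▸ hcb.2))
  have hPclosed : ∀ (u v : ↥S), (G.induce S).Adj u v → P ↑u → P ↑v := by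
    rintro ⟨u, huS⟩ ⟨v, hvS⟩ huv hPu
    have hg : G.Adj u v := by simpa using huv
    rcases hPu with ⟨hu1, hu2⟩ | ⟨c, hc, hcR, hcu⟩
    · rcases hadj_or hg with h | h
      · -- u is an ancestor of v
        by_cases hbv : Anc T r b v
        · obtain ⟨c, hcb, hcv⟩ := T2Aux.exists_child htree hbv (fun hh => hvS.2 hh.symm)
          refine Or.inr ⟨c, hcb, ?_, hcv⟩
          intro hRty
          have hcu' : ¬ Anc T r c u := fun hh => hu2 (T2Aux.anc_trans hcb.2 hh)
          have huL : u ∈ Lset G T r c := hLmem hcv hg h hcu'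
          have hub : u ≠ b := fun hh => hu2 (hh ▸ T2Aux.anc_refl T r b)
          have hunotchild : ¬ IsChild T r u c := fun hh =>
            hub (T2Aux.parent_unique htree hh hcb)
          have h1 : ¬ num a ≤ num (lwpt1 c) :=
            not_le.mpr (T2Aux.panc_num_lt hnum hRty)
          have h2 : num (hgpt c) ≤ num a := (hch c hcb).resolve_left h1
          rcases hhg c with ⟨hhL, hhnc, hhmax⟩ | ⟨hall, -⟩
          · have h3 : num u ≤ num (hgpt c) :=
              T2Aux.anc_num_le hnum (hhmax u huL hunotchild)
            have h4 : num a' ≤ num u := T2Aux.anc_num_le hnum hu1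
            omega
          · exact hunotchild (hall u huL)
        · exact Or.inl ⟨T2Aux.anc_trans hu1 h, hbv⟩
      · -- v is an ancestor of u
        rcases T2Aux.anc_total htree h hu1 with h' | h'
        · by_cases hva' : v = a'
          · subst hva'
            exact Or.inl ⟨T2Aux.anc_refl T r v,
              fun hb => hne (T2Aux.anc_antisymm htree ha'b hb)⟩
          · exfalso
            have hva : PAnc T r v a := by
              rcases (T2Aux.anc_child_iff htree hchild).1 h' with h'' | h''
              · exact ⟨h'', hvS.1⟩
              · exact absurd h'' hva'
            have hnum_u1 : num a' ≤ num u := T2Aux.anc_num_le hnum hu1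
            have hnum_u2 : num u < num b := T2Aux.leftmost_num_lt htree hnum hlm hu1 hu2
            have hnum_v : num v < num a := T2Aux.panc_num_lt hnum hva
            have hTadj : ¬ T.Adj u v := by
              intro hT'
              have hvchild : IsChild T r v u := ⟨hT'.symm, h⟩
              have hanc_a'v : Anc T r a' v := by
                by_cases hua' : u = a'
                · exact absurd (T2Aux.parent_unique htree hvchild (hua' ▸ hchild))
                    hvS.1
                · have hmem : a' ∈ (T2Aux.pth htree r u).support :=
                    (T2Aux.anc_iff htree).1 hu1
                  rw [T2Aux.pth_child htree hvchild, List.mem_append,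
                    List.mem_singleton] at hmem
                  rcases hmem with hh | hh
                  · exact T2Aux.anc_of_mem htree (T2Aux.pth_isPath htree r v) hh
                  · exact absurd hh.symm hua'
              exact hnaa' (T2Aux.anc_antisymm htree haa' (T2Aux.anc_trans hanc_a'v hva.1))
            have hvu : v ≠ u := fun hh => by
              rw [hh] at hnum_v; omega
            have hbe : IsBackEdge G T r u v := ⟨hg, fun hh => hTadj hh, h, hvu⟩
            have := hstab'' u v hbe hnum_u1 hnum_u2
            omega
        · exact Or.inl ⟨h', fun hb => hu2 (T2Aux.anc_trans hb h)⟩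
    · rcases hadj_or hg with h | h
      · exact Or.inr ⟨c, hc, hcR, T2Aux.anc_trans hcu h⟩
      · by_cases hcv : Anc T r c v
        · exact Or.inr ⟨c, hc, hcR, hcv⟩
        · have hvL : v ∈ Lset G T r c := hLmem hcu hg.symm h hcv
          have hvb : Anc T r v b := by
            rcases (T2Aux.anc_child_iff htree hc).1 hvL.1.1 with hh | hh
            · exact hh
            · exact absurd hh hvL.1.2
          by_cases ha'v : Anc T r a' v
          · exact Or.inl ⟨ha'v,
              fun hb => hvS.2 (T2Aux.anc_antisymm htree hvb hb)⟩
          · exfalso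
            have hva' : Anc T r v a' := by
              rcases T2Aux.anc_total htree hvb ha'b with hh | hh
              · exact hh
              · exact absurd hh ha'v
            have hva : PAnc T r v a := by
              rcases (T2Aux.anc_child_iff htree hchild).1 hva' with hh | hh
              · exact ⟨hh, hvS.1⟩
              · exact absurd (by rw [hh]; exact T2Aux.anc_refl T r a') ha'v
            obtain ⟨hlL, hlmin⟩ := T2Aux.lwpt1_min htree (hnum.2.2.1 c) ⟨b, hbLset hc⟩
            have hnum1 : num (lwpt1 c) ≤ num v := T2Aux.anc_num_le hnum (hlmin v hvL)
            have hnum2 : num v < num a := T2Aux.panc_num_lt hnum hva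
            have hRty : PAnc T r (lwpt1 c) a := by
              rcases T2Aux.anc_total htree hlL.1.1 (T2Aux.anc_trans hab hc.2) with hh | hh
              · refine ⟨hh, fun he => ?_⟩
                rw [he] at hnum1
                omega
              · have := T2Aux.anc_num_le hnum hh
                omega
            exact hcR hRty
  -- claim 3 : r and a' are in different components
  have claim3 : ¬ ∃ Cc : (G.induce S).ConnectedComponent,
      r ∈ Subtype.val '' Cc.supp ∧ a' ∈ Subtype.val '' Cc.supp := by
    rintro ⟨Cc, ⟨zr, hzr, hzrv⟩, ⟨za, hza, hzav⟩⟩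
    have hreach : (G.induce S).Reachable za zr :=
      SimpleGraph.ConnectedComponent.exact
        ((SimpleGraph.ConnectedComponent.mem_supp_iff _ _).1 hza |>.trans
          ((SimpleGraph.ConnectedComponent.mem_supp_iff _ _).1 hzr).symm)
    obtain ⟨p⟩ := hreach
    have hstart : (za : ↥S) ∈ {z : ↥S | P ↑z} := by
      show P ↑za
      rw [hzav]
      exact hPa'
    have hend : P ↑zr := T2Aux.walk_closed (K := {z : ↥S | P ↑z}) hPclosed p hstart
    rw [hzrv] at hend
    exact hPr hend
  refine ⟨?_, ?_, claim3, ?_⟩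
  · -- every component contains r, a', or is Desc d for d ∈ D
    intro Cc
    obtain ⟨x0, hx0⟩ := Cc.exists_rep
    by_cases hbx : Anc T r b (x0 : V)
    · obtain ⟨c, hcb, hcx⟩ := T2Aux.exists_child htree hbx (fun h => x0.2.2 h.symm)
      by_cases hcD : lwpt1 c = a ∧ lwpt2 c = b
      · refine Or.inr (Or.inr ⟨c, ?_, ?_⟩)
        · rw [hD]; exact ⟨hcb, hcD.1, hcD.2⟩
        · obtain ⟨hsupp, hmk⟩ :=
            HDsupp hcb hcD.1 hcD.2 (hSdesc hcb c (T2Aux.anc_refl T r c))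
          have hCc : (G.induce S).connectedComponentMk x0 = Cc := hx0
          rw [← hCc]
          exact (congrArg (fun C : (G.induce S).ConnectedComponent =>
            Subtype.val '' C.supp) (hmk (x0 : V) hcx x0.2)).trans hsupp
      · by_cases hcR : PAnc T r (lwpt1 c) a
        · left
          have hr := HreachR2 c hcb hcR (x0 : V) hcx
          refine ⟨⟨r, hrS⟩, ?_, rfl⟩
          show (G.induce S).connectedComponentMk ⟨r, hrS⟩ = Cc
          rw [← hx0]
          exact SimpleGraph.ConnectedComponent.sound hr.symm
        · right; left
          have hr := HreachA2 c hcb hcD hcR (x0 : V) hcx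
          refine ⟨⟨a', ha'S⟩, ?_, rfl⟩
          show (G.induce S).connectedComponentMk ⟨a', ha'S⟩ = Cc
          rw [← hx0]
          exact SimpleGraph.ConnectedComponent.sound hr.symm
    · by_cases ha'x : Anc T r a' (x0 : V)
      · right; left
        have hr := HreachA (x0 : V) ha'x hbx
        refine ⟨⟨a', ha'S⟩, ?_, rfl⟩
        show (G.induce S).connectedComponentMk ⟨a', ha'S⟩ = Cc
        rw [← hx0]
        exact SimpleGraph.ConnectedComponent.sound hr
      · left
        have hr := HreachR1 (x0 : V) ha'x x0.2
        refine ⟨⟨r, hrS⟩, ?_, rfl⟩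
        show (G.induce S).connectedComponentMk ⟨r, hrS⟩ = Cc
        rw [← hx0]
        exact SimpleGraph.ConnectedComponent.sound hr.symm
  · -- every d ∈ D gives a component
    intro d hd
    rw [hD] at hd
    obtain ⟨hdb, hd1, hd2⟩ := hd
    obtain ⟨hsupp, -⟩ := HDsupp hdb hd1 hd2 (hSdesc hdb d (T2Aux.anc_refl T r d))
    exact ⟨_, hsupp⟩
  · -- r and a' are not in Desc d
    intro d hd
    rw [hD] at hd
    obtain ⟨hdb, -, -⟩ := hd
    constructor
    · intro h
      have h1 : d = r := T2Aux.anc_r h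
      exact hbr (T2Aux.anc_r (h1 ▸ hdb.2))
    · intro h
      exact hne (T2Aux.anc_antisymm htree ha'b (T2Aux.anc_trans hdb.2 h))
end

section
/- Let G be a graph, S a set of nested separations of G, and (T, V) the tree-decomposition of G induced by S. A vertex x of G appears in exactly one bag of (T, V) if and only if x is not in the separator A ∩ B of any separation (A, B) ∈ S. Moreover, for every leaf t of T, the bag V_t contains at least one vertex that appears in exactly one bag; consequently, for every (A, B) ∈ S, both A and B contain a vertex appearing in exactly one bag. -/
open SimpleGraph

variable {V : Type*}

/-- `S` is a set of pairwise nested separations of `G`. -/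
def NestedFamily (G : SimpleGraph V) (S : Set (Set V × Set V)) : Prop :=
  (∀ AB ∈ S, IsSeparation G AB.1 AB.2) ∧
  ∀ AB ∈ S, ∀ CD ∈ S, Nested AB.1 AB.2 CD.1 CD.2

/-- A tree-decomposition of `G` with nodes indexed by `ι`. -/
structure TreeDecomp (G : SimpleGraph V) (ι : Type*) where
  tree : SimpleGraph ι
  isTree : tree.IsTree
  bag : ι → Set V
  bag_cover : ∀ v : V, ∃ t, v ∈ bag t
  bag_edge : ∀ u v : V, G.Adj u v → ∃ t, u ∈ bag t ∧ v ∈ bag t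
  bag_connected : ∀ (v : V) (t₁ t₂ : ι), v ∈ bag t₁ → v ∈ bag t₂ →
    ∀ p : tree.Walk t₁ t₂, p.IsPath → ∀ t ∈ p.support, v ∈ bag t

/-- The union of the bags over the component of `T - t₁t₂` containing `t₁`. -/
def TreeDecomp.side {G : SimpleGraph V} {ι : Type*} (td : TreeDecomp G ι)
    (t₁ t₂ : ι) : Set V :=
  ⋃ s ∈ {s : ι | ∀ p : td.tree.Walk s t₂, p.IsPath → t₁ ∈ p.support}, td.bag s

/-- The edge `t₁t₂` of the decomposition tree induces the separation `AB`
(in one of the two orientations). -/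
def TreeDecomp.EdgeInduces {G : SimpleGraph V} {ι : Type*} (td : TreeDecomp G ι)
    (t₁ t₂ : ι) (AB : Set V × Set V) : Prop :=
  (AB.1 = td.side t₁ t₂ ∧ AB.2 = td.side t₂ t₁) ∨
  (AB.1 = td.side t₂ t₁ ∧ AB.2 = td.side t₁ t₂)

/-- The tree-decomposition `td` is induced by the set `S` of separations:
the map sending each tree edge to its induced separation is a bijection onto `S`. -/
def TreeDecomp.InducedBy {G : SimpleGraph V} {ι : Type*} (td : TreeDecomp G ι)
    (S : Set (Set V × Set V)) : Prop :=
  (∀ AB ∈ S, ∃ t₁ t₂, td.tree.Adj t₁ t₂ ∧ td.EdgeInduces t₁ t₂ AB) ∧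
  (∀ t₁ t₂ : ι, td.tree.Adj t₁ t₂ → ∃ AB ∈ S, td.EdgeInduces t₁ t₂ AB) ∧
  (∀ t₁ t₂ s₁ s₂ : ι, ∀ AB ∈ S, td.tree.Adj t₁ t₂ → td.tree.Adj s₁ s₂ →
    td.EdgeInduces t₁ t₂ AB → td.EdgeInduces s₁ s₂ AB →
      (s₁ = t₁ ∧ s₂ = t₂) ∨ (s₁ = t₂ ∧ s₂ = t₁)) ∧
  (∀ t₁ t₂ : ι, ∀ AB ∈ S, ∀ CD ∈ S, td.tree.Adj t₁ t₂ →
    td.EdgeInduces t₁ t₂ AB → td.EdgeInduces t₁ t₂ CD → AB = CD ∨ AB = (CD.2, CD.1))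

/-- ancestor relation in the decomposition tree rooted at `rt`. -/
def TAnc {ι : Type*} (T : SimpleGraph ι) (rt u v : ι) : Prop :=
  ∀ p : T.Walk rt v, p.IsPath → u ∈ p.support

/-- the tree edge `e` is a proper ancestor of the tree edge `f`. -/
def EdgePAnc {ι : Type*} (T : SimpleGraph ι) (rt : ι) (e f : ι × ι) : Prop :=
  TAnc T rt e.1 f.1 ∧ TAnc T rt e.2 f.1 ∧ TAnc T rt e.1 f.2 ∧ TAnc T rt e.2 f.2 ∧
    ¬ (e.1 = f.1 ∧ e.2 = f.2) ∧ ¬ (e.1 = f.2 ∧ e.2 = f.1)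

/-- `u` and `v` are adjacent in the torso at node `t`. -/
def TreeDecomp.TorsoAdj {G : SimpleGraph V} {ι : Type*} (td : TreeDecomp G ι)
    (t : ι) (u v : V) : Prop :=
  u ≠ v ∧ u ∈ td.bag t ∧ v ∈ td.bag t ∧
    (G.Adj u v ∨ ∃ t', td.tree.Adj t t' ∧ u ∈ td.bag t' ∧ v ∈ td.bag t')


section UniqueBagAux

variable {ι : Type*} {T : SimpleGraph ι}

private lemma tree_path_eq (hT : T.IsTree) {s t : ι} {p q : T.Walk s t}
    (hp : p.IsPath) (hq : q.IsPath) : p = q :=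
  (hT.existsUnique_path s t).unique hp hq

private noncomputable def thePath (hT : T.IsTree) (s t : ι) : T.Walk s t :=
  (hT.existsUnique_path s t).exists.choose

private lemma thePath_isPath (hT : T.IsTree) (s t : ι) : (thePath hT s t).IsPath :=
  (hT.existsUnique_path s t).exists.choose_spec

/-- membership in the component of `t₁` of `T - t₁t₂`. -/
private def Cmem (T : SimpleGraph ι) (t₁ t₂ s : ι) : Prop :=
  ∀ p : T.Walk s t₂, p.IsPath → t₁ ∈ p.support

private lemma cmem_self (T : SimpleGraph ι) (t₁ t₂ : ι) : Cmem T t₁ t₂ t₁ :=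
  fun p _ => p.start_mem_support

private lemma mem_side {G : SimpleGraph V} {td : TreeDecomp G ι} {t₁ t₂ : ι} {x : V} :
    x ∈ td.side t₁ t₂ ↔ ∃ s, Cmem td.tree t₁ t₂ s ∧ x ∈ td.bag s := by
  simp only [TreeDecomp.side, Set.mem_iUnion, Set.mem_setOf_eq, exists_prop]
  rfl

private lemma cmem_not_both (hT : T.IsTree) {t₁ t₂ s : ι} (h : T.Adj t₁ t₂)
    (h1 : Cmem T t₁ t₂ s) (h2 : Cmem T t₂ t₁ s) : False := by
  classical
  have hne : t₁ ≠ t₂ := h.ne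
  have hs2 : s ≠ t₂ := by
    rintro rfl
    have := h1 SimpleGraph.Walk.nil SimpleGraph.Walk.IsPath.nil
    simp only [SimpleGraph.Walk.support_nil, List.mem_singleton] at this
    exact hne this
  have hp : (thePath hT s t₂).IsPath := thePath_isPath hT s t₂
  have ht1 : t₁ ∈ (thePath hT s t₂).support := h1 _ hp
  have hq : ((thePath hT s t₂).takeUntil t₁ ht1).IsPath := hp.takeUntil ht1
  have ht2q : t₂ ∈ ((thePath hT s t₂).takeUntil t₁ ht1).support := h2 _ hq
  have ht2d : t₂ ∈ ((thePath hT s t₂).dropUntil t₁ ht1).support.tail :=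
    SimpleGraph.Walk.end_mem_tail_support_of_ne hne _
  have hnd : ((((thePath hT s t₂).takeUntil t₁ ht1).append
      ((thePath hT s t₂).dropUntil t₁ ht1)).support).Nodup := by
    rw [SimpleGraph.Walk.take_spec]
    exact hp.support_nodup
  rw [SimpleGraph.Walk.support_append] at hnd
  exact (List.disjoint_of_nodup_append hnd) ht2q ht2d

end UniqueBagAux

/-- In the tree-decomposition induced by a nested set of separations: a vertex lies in
exactly one bag iff it lies in no separator; every leaf bag contains such a vertex;
hence both sides of every separation in `S` contain such a vertex. -/
theorem unique_bag_charac [Fintype V] [Nonempty V] (G : SimpleGraph V) {ι : Type*}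
    [Fintype ι] (td : TreeDecomp G ι) (S : Set (Set V × Set V))
    (hS : NestedFamily G S) (hind : td.InducedBy S) :
    (∀ x : V, (∃! t, x ∈ td.bag t) ↔ ∀ AB ∈ S, x ∉ AB.1 ∩ AB.2) ∧
    (∀ t : ι, ({s | td.tree.Adj t s}).Subsingleton →
      ∃ x ∈ td.bag t, ∃! t', x ∈ td.bag t') ∧
    (∀ AB ∈ S, (∃ x ∈ AB.1, ∃! t, x ∈ td.bag t) ∧
      (∃ x ∈ AB.2, ∃! t, x ∈ td.bag t)) := by
  classical
  have hT := td.isTree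
  -- a vertex lying in a unique bag cannot lie in both sides of a tree edge
  have K1 : ∀ (x : V) (t₁ t₂ : ι), td.tree.Adj t₁ t₂ → (∃! t, x ∈ td.bag t) →
      ¬ (x ∈ td.side t₁ t₂ ∧ x ∈ td.side t₂ t₁) := by
    rintro x t₁ t₂ hadj ⟨t₀, _, hu⟩ ⟨hA, hB⟩
    obtain ⟨s, hsC, hxs⟩ := mem_side.mp hA
    obtain ⟨s', hs'C, hxs'⟩ := mem_side.mp hB
    have hss : s = s' := (hu s hxs).trans (hu s' hxs').symm
    exact cmem_not_both hT hadj hsC (hss ▸ hs'C)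
  -- part 1
  have part1 : ∀ x : V, (∃! t, x ∈ td.bag t) ↔ ∀ AB ∈ S, x ∉ AB.1 ∩ AB.2 := by
    intro x
    constructor
    · intro hx AB hAB hmem
      obtain ⟨t₁, t₂, hadj, hei⟩ := hind.1 AB hAB
      rcases hei with ⟨h1, h2⟩ | ⟨h1, h2⟩
      · exact K1 x t₁ t₂ hadj hx ⟨h1 ▸ hmem.1, h2 ▸ hmem.2⟩
      · exact K1 x t₁ t₂ hadj hx ⟨h2 ▸ hmem.2, h1 ▸ hmem.1⟩
    · intro hx
      obtain ⟨t₀, hx0⟩ := td.bag_cover x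
      refine ⟨t₀, hx0, ?_⟩
      intro t₁ hx1
      by_contra hne
      have hp := thePath_isPath hT t₀ t₁
      have hnn : ¬ (thePath hT t₀ t₁).Nil :=
        SimpleGraph.Walk.not_nil_of_ne (fun h => hne h.symm)
      obtain ⟨t', hadj, q, hq⟩ := SimpleGraph.Walk.not_nil_iff.mp hnn
      obtain ⟨AB, hABS, hei⟩ := hind.2.1 t₀ t' hadj
      have hxA : x ∈ td.side t₀ t' := mem_side.mpr ⟨t₀, cmem_self _ _ _, hx0⟩
      have hxB : x ∈ td.side t' t₀ := by
        refine mem_side.mpr ⟨t₁, ?_, hx1⟩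
        intro r hr
        have hrq : r = (thePath hT t₀ t₁).reverse := tree_path_eq hT hr hp.reverse
        rw [hrq, SimpleGraph.Walk.support_reverse, List.mem_reverse, hq,
          SimpleGraph.Walk.support_cons]
        exact List.mem_cons_of_mem _ q.start_mem_support
      rcases hei with ⟨h1, h2⟩ | ⟨h1, h2⟩
      · exact hx AB hABS ⟨h1.symm ▸ hxA, h2.symm ▸ hxB⟩
      · exact hx AB hABS ⟨h1.symm ▸ hxB, h2.symm ▸ hxA⟩
  -- a leaf cannot be an internal vertex of a path avoiding its neighbour
  have LA : ∀ t t' s : ι, ({u | td.tree.Adj t u}).Subsingleton → td.tree.Adj t t' →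
      s ≠ t → Cmem td.tree t t' s → False := by
    intro t t' s hsub hadj hst hC
    have hp : (thePath hT s t').IsPath := thePath_isPath hT s t'
    have htp : t ∈ (thePath hT s t').support := hC _ hp
    have h1 : ¬ ((thePath hT s t').takeUntil t htp).reverse.Nil :=
      SimpleGraph.Walk.not_nil_of_ne hst.symm
    obtain ⟨w₁, hw₁, r₁, e₁⟩ := SimpleGraph.Walk.not_nil_iff.mp h1
    have hw₁mem : w₁ ∈ ((thePath hT s t').takeUntil t htp).support := by
      have hmem : w₁ ∈ ((thePath hT s t').takeUntil t htp).reverse.support := by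
        rw [e₁, SimpleGraph.Walk.support_cons]
        exact List.mem_cons_of_mem _ r₁.start_mem_support
      rwa [SimpleGraph.Walk.support_reverse, List.mem_reverse] at hmem
    have h2 : ¬ ((thePath hT s t').dropUntil t htp).Nil :=
      SimpleGraph.Walk.not_nil_of_ne hadj.ne
    obtain ⟨w₂, hw₂, r₂, e₂⟩ := SimpleGraph.Walk.not_nil_iff.mp h2
    have hw₂mem : w₂ ∈ ((thePath hT s t').dropUntil t htp).support.tail := by
      rw [e₂, SimpleGraph.Walk.support_cons, List.tail_cons]
      exact r₂.start_mem_support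
    have hww : w₁ = w₂ := hsub hw₁ hw₂
    have hnd : ((((thePath hT s t').takeUntil t htp).append
        ((thePath hT s t').dropUntil t htp)).support).Nodup := by
      rw [SimpleGraph.Walk.take_spec]
      exact hp.support_nodup
    rw [SimpleGraph.Walk.support_append] at hnd
    exact (List.disjoint_of_nodup_append hnd) hw₁mem (hww ▸ hw₂mem)
  -- every path from another node to a leaf passes through the leaf's neighbour
  have LB : ∀ t t' s : ι, ({u | td.tree.Adj t u}).Subsingleton → td.tree.Adj t t' →
      s ≠ t → Cmem td.tree t' t s := by
    intro t t' s hsub hadj hst r hr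
    have hnn : ¬ r.reverse.Nil := SimpleGraph.Walk.not_nil_of_ne hst.symm
    obtain ⟨w, hw, r', he⟩ := SimpleGraph.Walk.not_nil_iff.mp hnn
    have hwt : w = t' := hsub hw hadj
    have hmem : t' ∈ r.reverse.support := by
      rw [he, SimpleGraph.Walk.support_cons]
      exact List.mem_cons_of_mem _ (hwt ▸ r'.start_mem_support)
    rwa [SimpleGraph.Walk.support_reverse, List.mem_reverse] at hmem
  -- part 2 : every leaf bag contains a uniquely-bagged vertex
  have Leaf : ∀ t : ι, ({s | td.tree.Adj t s}).Subsingleton →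
      ∃ x ∈ td.bag t, ∃! t', x ∈ td.bag t' := by
    intro t hsub
    by_cases hex : ∃ t', td.tree.Adj t t'
    · obtain ⟨t', hadj⟩ := hex
      obtain ⟨AB, hABS, hei⟩ := hind.2.1 t t' hadj
      have hside : td.side t t' = td.bag t := by
        apply Set.Subset.antisymm
        · intro x hx
          obtain ⟨s, hsC, hxs⟩ := mem_side.mp hx
          rcases eq_or_ne s t with rfl | hne
          · exact hxs
          · exact absurd hsC (fun h => LA t t' s hsub hadj hne h)
        · intro x hx
          exact mem_side.mpr ⟨t, cmem_self _ _ _, hx⟩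
      have hsep := hS.1 AB hABS
      have hex2 : ∃ x, x ∈ td.bag t ∧ x ∉ td.side t' t := by
        rcases hei with ⟨h1, h2⟩ | ⟨h1, h2⟩
        · obtain ⟨x, hx⟩ := hsep.2.1
          exact ⟨x, by rw [← hside, ← h1]; exact hx.1, by rw [← h2]; exact hx.2⟩
        · obtain ⟨x, hx⟩ := hsep.2.2.1
          exact ⟨x, by rw [← hside, ← h2]; exact hx.1, by rw [← h1]; exact hx.2⟩
      obtain ⟨x, hxt, hxn⟩ := hex2
      refine ⟨x, hxt, t, hxt, ?_⟩
      intro s hxs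
      by_contra hne
      exact hxn (mem_side.mpr ⟨s, LB t t' s hsub hadj hne, hxs⟩)
    · push_neg at hex
      have hall : ∀ s : ι, s = t := by
        intro s
        by_contra hne
        have hnn : ¬ (thePath hT t s).Nil :=
          SimpleGraph.Walk.not_nil_of_ne (fun h => hne h.symm)
        obtain ⟨w, hw, _, _⟩ := SimpleGraph.Walk.not_nil_iff.mp hnn
        exact hex w hw
      obtain ⟨v⟩ := ‹Nonempty V›
      obtain ⟨t₀, h₀⟩ := td.bag_cover v
      rw [hall t₀] at h₀
      exact ⟨v, h₀, t, h₀, fun s _ => hall s⟩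
  -- each side of a tree edge contains a uniquely-bagged vertex
  have SideU : ∀ t₁ t₂ : ι, td.tree.Adj t₁ t₂ →
      ∃ x ∈ td.side t₁ t₂, ∃! t, x ∈ td.bag t := by
    intro t₁ t₂ hadj
    obtain ⟨u, huF, hmax⟩ := Finset.exists_max_image
      (Finset.univ.filter (fun s => Cmem td.tree t₁ t₂ s))
      (fun s => (thePath hT s t₂).length)
      ⟨t₁, Finset.mem_filter.mpr ⟨Finset.mem_univ t₁, cmem_self _ _ _⟩⟩
    have huC : Cmem td.tree t₁ t₂ u := (Finset.mem_filter.mp huF).2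
    have hut₂ : u ≠ t₂ := by
      rintro rfl
      have h := huC SimpleGraph.Walk.nil SimpleGraph.Walk.IsPath.nil
      simp only [SimpleGraph.Walk.support_nil, List.mem_singleton] at h
      exact hadj.ne h
    have hp : (thePath hT u t₂).IsPath := thePath_isPath hT u t₂
    have ht₁p : t₁ ∈ (thePath hT u t₂).support := huC _ hp
    have hnn : ¬ (thePath hT u t₂).Nil := SimpleGraph.Walk.not_nil_of_ne hut₂
    obtain ⟨v, hv, q, ep⟩ := SimpleGraph.Walk.not_nil_iff.mp hnn
    have hkey : ∀ w, td.tree.Adj u w → w = v := by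
      intro w hw
      by_contra hwv
      have hwp : w ∉ (thePath hT u t₂).support := by
        intro hwp
        have htu : ((thePath hT u t₂).takeUntil w hwp).IsPath := hp.takeUntil hwp
        have hse : (SimpleGraph.Walk.cons hw SimpleGraph.Walk.nil).IsPath := by
          simp [hw.ne]
        have heq : (thePath hT u t₂).takeUntil w hwp =
            SimpleGraph.Walk.cons hw SimpleGraph.Walk.nil := tree_path_eq hT htu hse
        have hL : (thePath hT u t₂).support = u :: v :: q.support.tail := by
          rw [ep, SimpleGraph.Walk.support_cons, q.support_eq_cons]
          simp
        have hR : (thePath hT u t₂).support =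
            u :: w :: ((thePath hT u t₂).dropUntil w hwp).support.tail := by
          conv_lhs => rw [← (thePath hT u t₂).take_spec hwp]
          rw [SimpleGraph.Walk.support_append, heq]
          simp
        rw [hL] at hR
        exact hwv (List.head_eq_of_cons_eq (List.tail_eq_of_cons_eq hR)).symm
      have hp' : (SimpleGraph.Walk.cons hw.symm (thePath hT u t₂)).IsPath := hp.cons hwp
      have hwC : Cmem td.tree t₁ t₂ w := by
        intro r hr
        have hre : r = SimpleGraph.Walk.cons hw.symm (thePath hT u t₂) :=
          tree_path_eq hT hr hp'
        rw [hre, SimpleGraph.Walk.support_cons]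
        exact List.mem_cons_of_mem _ ht₁p
      have hle := hmax w (Finset.mem_filter.mpr ⟨Finset.mem_univ w, hwC⟩)
      have hpe : thePath hT w t₂ = SimpleGraph.Walk.cons hw.symm (thePath hT u t₂) :=
        tree_path_eq hT (thePath_isPath hT w t₂) hp'
      rw [hpe] at hle
      simp only [SimpleGraph.Walk.length_cons] at hle
      omega
    have hleaf : ({s | td.tree.Adj u s}).Subsingleton := by
      intro a ha b hb
      rw [hkey a ha, hkey b hb]
    obtain ⟨x, hxu, hx⟩ := Leaf u hleaf
    exact ⟨x, mem_side.mpr ⟨u, huC, hxu⟩, hx⟩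
  refine ⟨part1, Leaf, ?_⟩
  intro AB hAB
  obtain ⟨t₁, t₂, hadj, hei⟩ := hind.1 AB hAB
  obtain ⟨x₁, hx₁, hu₁⟩ := SideU t₁ t₂ hadj
  obtain ⟨x₂, hx₂, hu₂⟩ := SideU t₂ t₁ hadj.symm
  rcases hei with ⟨h1, h2⟩ | ⟨h1, h2⟩
  · exact ⟨⟨x₁, h1.symm ▸ hx₁, hu₁⟩, ⟨x₂, h2.symm ▸ hx₂, hu₂⟩⟩
  · exact ⟨⟨x₂, h1.symm ▸ hx₂, hu₂⟩, ⟨x₁, h2.symm ▸ hx₁, hu₁⟩⟩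
end

section
/- Let G be a graph, S a set of nested minimal separations of G, and x a vertex such that x ∈ A \ B for every (A, B) ∈ S. Then for any two distinct separations (A_i, B_i), (A_j, B_j) ∈ S, the sets B_i \ A_i and B_j \ A_j are either disjoint, or one is a proper subset of the other (i.e., the family {B \ A : (A,B) ∈ S} is laminar). -/
open SimpleGraph

variable {V : Type*}

lemma sep_compl {G : SimpleGraph V} {A B : Set V} (h : IsSeparation G A B) :
    B \ A = Aᶜ := by
  ext v
  constructor
  · exact fun hv => hv.2
  · intro hv
    refine ⟨?_, hv⟩
    rcases Set.eq_univ_iff_forall.mp h.1 v with h' | h'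
    · exact absurd h' hv
    · exact h'

lemma minsep_det {G : SimpleGraph V} {A B C D : Set V}
    (hAB : IsMinimalSep G A B) (hCD : IsMinimalSep G C D) (h : A = C) : B ⊆ D := by
  intro v hv
  by_cases hvA : v ∈ A
  · obtain ⟨u, hu, hadj⟩ := (hAB.2 v ⟨hvA, hv⟩).2
    have huC : u ∉ C := h ▸ hu.2
    have huD : u ∈ D := by
      rcases Set.eq_univ_iff_forall.mp hCD.1.1 u with h' | h'
      · exact absurd h' huC
      · exact h'
    by_contra hvD
    exact hCD.1.2.2.2 v ⟨h ▸ hvA, hvD⟩ u ⟨huD, huC⟩ hadj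
  · have hvC : v ∉ C := h ▸ hvA
    rcases Set.eq_univ_iff_forall.mp hCD.1.1 v with h' | h'
    · exact absurd h' hvC
    · exact h'

/-- If `S` is a nested set of minimal separations all oriented so that a fixed vertex
`x` lies in `A \ B`, then the family `{B \ A : (A,B) ∈ S}` is laminar. -/
theorem nested_laminar (G : SimpleGraph V) (S : Set (Set V × Set V)) (x : V)
    (hmin : ∀ AB ∈ S, IsMinimalSep G AB.1 AB.2)
    (hnested : ∀ AB ∈ S, ∀ CD ∈ S, Nested AB.1 AB.2 CD.1 CD.2)
    (hx : ∀ AB ∈ S, x ∈ AB.1 \ AB.2) :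
    ∀ AB ∈ S, ∀ CD ∈ S, AB ≠ CD →
      (AB.2 \ AB.1) ∩ (CD.2 \ CD.1) = ∅ ∨
      AB.2 \ AB.1 ⊂ CD.2 \ CD.1 ∨
      CD.2 \ CD.1 ⊂ AB.2 \ AB.1 := by
  rintro ⟨A, B⟩ hAB ⟨C, D⟩ hCD hne
  simp only at *
  have hABm := hmin _ hAB
  have hCDm := hmin _ hCD
  have hBA : B \ A = Aᶜ := sep_compl hABm.1
  have hDC : D \ C = Cᶜ := sep_compl hCDm.1
  have hdet : A = C → False := by
    intro hAC
    exact hne (Prod.ext hAC (Set.Subset.antisymm (minsep_det hABm hCDm hAC)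
      (minsep_det hCDm hABm hAC.symm)))
  rcases hnested _ hAB _ hCD with ⟨h1, h2⟩ | ⟨h1, h2⟩ | ⟨h1, h2⟩ | ⟨h1, h2⟩
  · right; right
    rw [hBA, hDC]
    refine ⟨Set.compl_subset_compl.mpr h1, fun hc => ?_⟩
    exact hdet (compl_injective (Set.Subset.antisymm
      (Set.compl_subset_compl.mpr h1) hc).symm)
  · exact absurd (h1 (hx _ hAB).1) (hx _ hCD).2
  · left
    rw [hBA, hDC]
    ext v
    simp only [Set.mem_inter_iff, Set.mem_compl_iff, Set.mem_empty_iff_false, iff_false,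
      not_and]
    intro hvA hvC
    have hvB : v ∈ B := by
      rcases Set.eq_univ_iff_forall.mp hABm.1.1 v with h' | h'
      · exact absurd h' hvA
      · exact h'
    exact hvC (h1 hvB)
  · right; left
    rw [hBA, hDC]
    refine ⟨Set.compl_subset_compl.mpr h2, fun hc => ?_⟩
    exact hdet (compl_injective (Set.Subset.antisymm
      (Set.compl_subset_compl.mpr h2) hc))
end

section
/- Let G be a graph, S = {(A₁,B₁),…,(A_p,B_p)} a set of nested minimal separations of G, oriented so that some fixed vertex x lies in A_i \ B_i for all i. Then p ≤ 2n − 3, where n = |V(G)| ≥ 2. -/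
open SimpleGraph

variable {V : Type*}

lemma laminar_bound {α : Type*} [DecidableEq α] :
    ∀ (U : Finset α) (𝒜 : Finset (Finset α)),
    (∀ A ∈ 𝒜, A ⊆ U) → (∀ A ∈ 𝒜, A.Nonempty) →
    (∀ A ∈ 𝒜, ∀ B ∈ 𝒜, A ⊆ B ∨ B ⊆ A ∨ Disjoint A B) →
    𝒜.card ≤ 2 * U.card - 1 := by
  intro U
  induction U using Finset.strongInduction with
  | _ U ih =>
    intro 𝒜 hsub hne hlam
    by_cases h𝒜 : 𝒜 = ∅
    · simp [h𝒜]
    obtain ⟨A₀, hA₀⟩ := Finset.nonempty_iff_ne_empty.2 h𝒜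
    have hU1 : 1 ≤ U.card := Finset.card_pos.2 ((hne A₀ hA₀).mono (hsub A₀ hA₀))
    set 𝒜' := 𝒜.erase U with h𝒜'
    have hcard1 : 𝒜.card ≤ 𝒜'.card + 1 := by
      have : 𝒜 ⊆ insert U 𝒜' := by
        intro A hA
        by_cases hAU : A = U
        · simp [hAU]
        · exact Finset.mem_insert_of_mem (Finset.mem_erase.2 ⟨hAU, hA⟩)
      calc 𝒜.card ≤ (insert U 𝒜').card := Finset.card_le_card this
        _ ≤ 𝒜'.card + 1 := Finset.card_insert_le _ _
    by_cases h𝒜'e : 𝒜' = ∅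
    · rw [h𝒜'e] at hcard1; simp at hcard1; omega
    obtain ⟨M, hM𝒜', hMmax⟩ : ∃ m ∈ 𝒜', ∀ y ∈ 𝒜', ¬ m < y := by
      obtain ⟨m, hm⟩ := Finset.exists_maximal (Finset.nonempty_iff_ne_empty.2 h𝒜'e)
      exact ⟨m, hm.1, fun y hy hlt => hlt.not_ge (hm.2 hy hlt.le)⟩
    have hM𝒜 : M ∈ 𝒜 := Finset.mem_of_mem_erase hM𝒜'
    have hMU : M ⊂ U :=
      Finset.ssubset_iff_subset_ne.2 ⟨hsub M hM𝒜, (Finset.mem_erase.1 hM𝒜').1⟩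
    have hMne : M.Nonempty := hne M hM𝒜
    set 𝒜₁ := 𝒜'.filter (· ⊆ M) with h𝒜₁
    set 𝒜₂ := 𝒜'.filter (fun A => Disjoint A M) with h𝒜₂
    have hsplit : 𝒜' ⊆ 𝒜₁ ∪ 𝒜₂ := by
      intro A hA
      rcases hlam A (Finset.mem_of_mem_erase hA) M hM𝒜 with h | h | h
      · exact Finset.mem_union_left _ (Finset.mem_filter.2 ⟨hA, h⟩)
      · have : A = M := by
          by_contra hne'
          exact hMmax A hA (Finset.ssubset_iff_subset_ne.2 ⟨h, Ne.symm hne'⟩)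
        exact Finset.mem_union_left _ (Finset.mem_filter.2 ⟨hA, by simp [this]⟩)
      · exact Finset.mem_union_right _ (Finset.mem_filter.2 ⟨hA, h⟩)
    have hb1 : 𝒜₁.card ≤ 2 * M.card - 1 := by
      refine ih M hMU 𝒜₁ (fun A hA => (Finset.mem_filter.1 hA).2)
        (fun A hA => hne A (Finset.mem_of_mem_erase (Finset.mem_filter.1 hA).1))
        (fun A hA B hB => hlam A (Finset.mem_of_mem_erase (Finset.mem_filter.1 hA).1)
          B (Finset.mem_of_mem_erase (Finset.mem_filter.1 hB).1))
    have hb2 : 𝒜₂.card ≤ 2 * (U \ M).card - 1 := by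
      refine ih (U \ M) ?_ 𝒜₂ ?_
        (fun A hA => hne A (Finset.mem_of_mem_erase (Finset.mem_filter.1 hA).1))
        (fun A hA B hB => hlam A (Finset.mem_of_mem_erase (Finset.mem_filter.1 hA).1)
          B (Finset.mem_of_mem_erase (Finset.mem_filter.1 hB).1))
      · exact Finset.sdiff_ssubset hMU.subset hMne
      · intro A hA
        have h1 := Finset.mem_filter.1 hA
        exact Finset.subset_sdiff.2
          ⟨hsub A (Finset.mem_of_mem_erase h1.1), h1.2⟩
    have hcard2 : 𝒜'.card ≤ 𝒜₁.card + 𝒜₂.card :=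
      le_trans (Finset.card_le_card hsplit) (Finset.card_union_le _ _)
    have hMcard : M.card < U.card := Finset.card_lt_card hMU
    have hMpos : 1 ≤ M.card := Finset.card_pos.2 hMne
    have hsd : (U \ M).card = U.card - M.card := Finset.card_sdiff_of_subset hMU.subset
    omega

lemma sep_eq_of_diff_eq (G : SimpleGraph V) (AB CD : Set V × Set V)
    (h1 : IsMinimalSep G AB.1 AB.2) (h2 : IsMinimalSep G CD.1 CD.2)
    (h : AB.2 \ AB.1 = CD.2 \ CD.1) : AB = CD := by
  obtain ⟨A, B⟩ := AB
  obtain ⟨C, D⟩ := CD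
  simp only at h1 h2 h ⊢
  have hBA : B \ A = Aᶜ := by
    apply Set.eq_of_subset_of_subset (fun v hv => hv.2)
    intro v hv
    have : v ∈ A ∪ B := h1.1.1 ▸ Set.mem_univ v
    exact ⟨this.resolve_left hv, hv⟩
  have hDC : D \ C = Cᶜ := by
    apply Set.eq_of_subset_of_subset (fun v hv => hv.2)
    intro v hv
    have : v ∈ C ∪ D := h2.1.1 ▸ Set.mem_univ v
    exact ⟨this.resolve_left hv, hv⟩
  have hAC : A = C := compl_injective (by rw [← hBA, ← hDC, h])
  subst hAC
  have hBD : B = D := by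
    apply Set.eq_of_subset_of_subset
    · intro v hvB
      by_contra hvD
      have hvA : v ∈ A := by
        by_contra hvA
        exact hvD (h.subset ⟨hvB, hvA⟩).1
      obtain ⟨u, hu, hadj⟩ := (h1.2 v ⟨hvA, hvB⟩).2
      exact h2.1.2.2.2 v ⟨hvA, hvD⟩ u (h.subset hu) hadj
    · intro v hvD
      by_contra hvB
      have hvA : v ∈ A := by
        by_contra hvA
        exact hvB (h.symm.subset ⟨hvD, hvA⟩).1
      obtain ⟨u, hu, hadj⟩ := (h2.2 v ⟨hvA, hvD⟩).2
      exact h1.1.2.2.2 v ⟨hvA, hvB⟩ u (h.symm.subset hu) hadj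
  rw [hBD]

/-- A nested set of minimal separations, oriented so that a fixed vertex `x` lies in
`A \ B` for all of them, has at most `2n - 3` members, where `n = |V(G)| ≥ 2`. -/
theorem nested_card_bound [Fintype V] (G : SimpleGraph V)
    (S : Set (Set V × Set V)) (x : V)
    (hn : 2 ≤ Fintype.card V)
    (hmin : ∀ AB ∈ S, IsMinimalSep G AB.1 AB.2)
    (hnested : ∀ AB ∈ S, ∀ CD ∈ S, Nested AB.1 AB.2 CD.1 CD.2)
    (hx : ∀ AB ∈ S, x ∈ AB.1 \ AB.2) :
    S.ncard ≤ 2 * Fintype.card V - 3 := by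
  classical
  have hSfin : S.Finite := Set.toFinite S
  set f : Set V × Set V → Finset V := fun AB => (AB.2 \ AB.1).toFinset with hf
  set 𝒜 : Finset (Finset V) := hSfin.toFinset.image f with h𝒜
  have hinj : Set.InjOn f hSfin.toFinset := by
    intro AB hAB CD hCD hEq
    have hAB' : AB ∈ S := hSfin.mem_toFinset.1 hAB
    have hCD' : CD ∈ S := hSfin.mem_toFinset.1 hCD
    refine sep_eq_of_diff_eq G AB CD (hmin AB hAB') (hmin CD hCD') ?_
    have := congrArg (fun (s : Finset V) => (s : Set V)) hEq
    simp only [hf, Set.coe_toFinset] at this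
    exact this
  have hcard : S.ncard = 𝒜.card := by
    rw [h𝒜, Finset.card_image_of_injOn hinj, Set.ncard_eq_toFinset_card S hSfin]
  set U : Finset V := Finset.univ.erase x with hU
  have hUcard : U.card = Fintype.card V - 1 := by
    rw [hU, Finset.card_erase_of_mem (Finset.mem_univ x), Finset.card_univ]
  have hbound : 𝒜.card ≤ 2 * U.card - 1 := by
    refine laminar_bound U 𝒜 ?_ ?_ ?_
    · intro A hA
      obtain ⟨AB, hAB, rfl⟩ := Finset.mem_image.1 hA
      have hAB' : AB ∈ S := hSfin.mem_toFinset.1 hAB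
      intro v hv
      rw [hf] at hv
      simp only [Set.mem_toFinset] at hv
      refine Finset.mem_erase.2 ⟨?_, Finset.mem_univ v⟩
      rintro rfl
      exact (hx AB hAB').2 hv.1
    · intro A hA
      obtain ⟨AB, hAB, rfl⟩ := Finset.mem_image.1 hA
      have hAB' : AB ∈ S := hSfin.mem_toFinset.1 hAB
      rw [hf]
      exact Set.toFinset_nonempty.mpr (hmin AB hAB').1.2.2.1
    · intro A hA B hB
      obtain ⟨AB, hAB, rfl⟩ := Finset.mem_image.1 hA
      obtain ⟨CD, hCD, rfl⟩ := Finset.mem_image.1 hB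
      have hAB' : AB ∈ S := hSfin.mem_toFinset.1 hAB
      have hCD' : CD ∈ S := hSfin.mem_toFinset.1 hCD
      have hxAB := hx AB hAB'
      have hxCD := hx CD hCD'
      have hset : (AB.2 \ AB.1) ⊆ (CD.2 \ CD.1) ∨ (CD.2 \ CD.1) ⊆ (AB.2 \ AB.1) ∨
          Disjoint (AB.2 \ AB.1) (CD.2 \ CD.1) := by
        rcases hnested AB hAB' CD hCD' with h | h | h | h
        · -- AB.1 ⊆ CD.1 ∧ CD.2 ⊆ AB.2 : CD.2\CD.1 ⊆ AB.2\AB.1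
          right; left
          intro v hv
          exact ⟨h.2 hv.1, fun hvA => hv.2 (h.1 hvA)⟩
        · -- AB.1 ⊆ CD.2 : x ∈ CD.2, contradiction
          exact absurd (h.1 hxAB.1) hxCD.2
        · -- AB.2 ⊆ CD.1 ∧ CD.2 ⊆ AB.1 : disjoint
          right; right
          rw [Set.disjoint_left]
          intro v hv hv'
          exact hv.2 (h.2 hv'.1)
        · -- AB.2 ⊆ CD.2 ∧ CD.1 ⊆ AB.1
          left
          intro v hv
          exact ⟨h.1 hv.1, fun hvC => hv.2 (h.2 hvC)⟩
      rw [hf]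
      simp only [Set.toFinset_subset_toFinset, Set.disjoint_toFinset]
      exact hset
  rw [hcard]
  omega
end
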